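/- arXiv:1209.3543 — 8 statements merged into one kernel-verified Lean document; each statement's English description precedes it below -/
import Mathlib

section
/- Let L > 0 and T > 0, and let φ be a classical solution on [0,L]×[0,T] of the adjoint linear KdV system φ_t + φ_x + φ_{xxx} = 0 with boundary conditions φ(L,t) = 0, φ_x(L,t) = 0 and φ(0,t) + φ_{xx}(0,t) = 0 for all t ∈ [0,T]. Then the energy identity ∫₀^L φ(x,T)² dx + ∫₀^T ( φ(0,t)² + φ_x(0,t)² ) dt = ∫₀^L φ(x,0)² dx holds. -/
/-!
Multiply the equation by `2φ` and integrate over the rectangle `[0,L] × [0,T]`. Integrating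
`2 φ φ_t` in `t` first gives `∫ φ(x,T)² - ∫ φ(x,0)²`. Integrating in `x` first, the equation turns
`2 φ φ_t` into `-2 φ (φ_x + φ_xxx)`, the `x`-derivative of `-(φ² + 2 φ φ_xx - φ_x²)`; this flux
vanishes at `x = L` and equals `-(φ(0,t)² + φ_x(0,t)²)` at `x = 0` by the boundary conditions.
Fubini's theorem equates the two iterated integrals.
-/

open MeasureTheory Set intervalIntegral

theorem intervalIntegral_integral_swap_of_continuousOn {E : Type*} [NormedAddCommGroup E]
    [NormedSpace ℝ E] {f : ℝ → ℝ → E} {a b c d : ℝ} (hab : a ≤ b) (hcd : c ≤ d)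
    (hf : ContinuousOn (Function.uncurry f) (Icc a b ×ˢ Icc c d)) :
    ∫ x in a..b, ∫ y in c..d, f x y = ∫ y in c..d, ∫ x in a..b, f x y := by
  have hint : IntegrableOn (Function.uncurry f) (Ioc a b ×ˢ Ioc c d) :=
    (hf.integrableOn_compact (isCompact_Icc.prod isCompact_Icc)).mono_set
      (prod_mono Ioc_subset_Icc_self Ioc_subset_Icc_self)
  simp only [integral_of_le hab, integral_of_le hcd]
  exact integral_integral_swap (by rw [Measure.prod_restrict]; exact hint)

theorem integral_two_mul_mul_deriv_eq_sq_sub {u u' : ℝ → ℝ} {a b : ℝ}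
    (hu : ∀ t ∈ uIcc a b, HasDerivAt u (u' t) t)
    (hint : IntervalIntegrable (fun t => 2 * u t * u' t) volume a b) :
    ∫ t in a..b, 2 * u t * u' t = u b ^ 2 - u a ^ 2 :=
  integral_eq_sub_of_hasDerivAt (fun t ht => by simpa using (hu t ht).pow 2) hint

theorem hasDerivAt_kdv_flux {u u₁ u₂ u₃ : ℝ → ℝ} {x : ℝ}
    (h₁ : HasDerivAt u (u₁ x) x) (h₂ : HasDerivAt u₁ (u₂ x) x) (h₃ : HasDerivAt u₂ (u₃ x) x) :
    HasDerivAt (fun y => u y ^ 2 + 2 * u y * u₂ y - u₁ y ^ 2) (2 * u x * (u₁ x + u₃ x)) x := by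
  refine (((h₁.pow 2).add ((h₁.const_mul 2).mul h₃)).sub (h₂.pow 2)).congr_deriv ?_
  norm_num
  ring

theorem integral_two_mul_mul_eq_kdv_flux_sub {u u₁ u₂ u₃ v : ℝ → ℝ} {a b : ℝ}
    (h₁ : ∀ x ∈ uIcc a b, HasDerivAt u (u₁ x) x)
    (h₂ : ∀ x ∈ uIcc a b, HasDerivAt u₁ (u₂ x) x)
    (h₃ : ∀ x ∈ uIcc a b, HasDerivAt u₂ (u₃ x) x)
    (heq : ∀ x ∈ uIcc a b, v x + u₁ x + u₃ x = 0)
    (hint : IntervalIntegrable (fun x => 2 * u x * v x) volume a b) :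
    ∫ x in a..b, 2 * u x * v x
      = (u a ^ 2 + 2 * u a * u₂ a - u₁ a ^ 2) - (u b ^ 2 + 2 * u b * u₂ b - u₁ b ^ 2) := by
  have hftc := integral_eq_sub_of_hasDerivAt (f' := fun x => -(2 * u x * v x)) (fun x hx =>
    (hasDerivAt_kdv_flux (h₁ x hx) (h₂ x hx) (h₃ x hx)).congr_deriv
      (by linear_combination 2 * u x * heq x hx)) hint.neg
  rw [intervalIntegral.integral_neg] at hftc
  linarith

theorem adjoint_kdv_energy_identity_general
    (L T : ℝ) (hL : 0 < L) (hT : 0 < T)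
    (φ φt φx φxx φxxx : ℝ → ℝ → ℝ)
    (hφt : ∀ x ∈ Icc (0:ℝ) L, ∀ t ∈ Icc (0:ℝ) T,
      HasDerivAt (fun s => φ x s) (φt x t) t)
    (hφx : ∀ x ∈ Icc (0:ℝ) L, ∀ t ∈ Icc (0:ℝ) T,
      HasDerivAt (fun y => φ y t) (φx x t) x)
    (hφxx : ∀ x ∈ Icc (0:ℝ) L, ∀ t ∈ Icc (0:ℝ) T,
      HasDerivAt (fun y => φx y t) (φxx x t) x)
    (hφxxx : ∀ x ∈ Icc (0:ℝ) L, ∀ t ∈ Icc (0:ℝ) T,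
      HasDerivAt (fun y => φxx y t) (φxxx x t) x)
    (hcont : ContinuousOn (fun p : ℝ × ℝ => φ p.1 p.2) (Icc 0 L ×ˢ Icc 0 T))
    (hcontt : ContinuousOn (fun p : ℝ × ℝ => φt p.1 p.2) (Icc 0 L ×ˢ Icc 0 T))
    (hpde : ∀ x ∈ Icc (0:ℝ) L, ∀ t ∈ Icc (0:ℝ) T,
      φt x t + φx x t + φxxx x t = 0)
    (hbc1 : ∀ t ∈ Icc (0:ℝ) T, φ L t = 0)
    (hbc2 : ∀ t ∈ Icc (0:ℝ) T, φx L t = 0)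
    (hbc3 : ∀ t ∈ Icc (0:ℝ) T, φ 0 t + φxx 0 t = 0) :
    (∫ x in (0:ℝ)..L, (φ x T) ^ 2)
      + (∫ t in (0:ℝ)..T, ((φ 0 t) ^ 2 + (φx 0 t) ^ 2))
      = ∫ x in (0:ℝ)..L, (φ x 0) ^ 2 := by
  have hIccL : uIcc 0 L = Icc 0 L := uIcc_of_le hL.le
  have hIccT : uIcc 0 T = Icc 0 T := uIcc_of_le hT.le
  have hF : ContinuousOn (Function.uncurry fun x t => 2 * φ x t * φt x t)
      (Icc 0 L ×ˢ Icc 0 T) :=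
    (continuousOn_const.mul hcont).mul hcontt
  have htime : EqOn (fun x => ∫ t in (0:ℝ)..T, 2 * φ x t * φt x t)
      (fun x => φ x T ^ 2 - φ x 0 ^ 2) (uIcc 0 L) := fun x hx => by
    rw [hIccL] at hx
    exact integral_two_mul_mul_deriv_eq_sq_sub (fun t ht => hφt x hx t (hIccT ▸ ht))
      ((hF.uncurry_left x hx).intervalIntegrable_of_Icc hT.le)
  have hspace : EqOn (fun t => ∫ x in (0:ℝ)..L, 2 * φ x t * φt x t)
      (fun t => -(φ 0 t ^ 2 + φx 0 t ^ 2)) (uIcc 0 T) := fun t ht => by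
    rw [hIccT] at ht
    have hmem (x) (hx : x ∈ uIcc 0 L) : x ∈ Icc 0 L := hIccL ▸ hx
    dsimp only
    rw [integral_two_mul_mul_eq_kdv_flux_sub (fun x hx => hφx x (hmem x hx) t ht)
      (fun x hx => hφxx x (hmem x hx) t ht) (fun x hx => hφxxx x (hmem x hx) t ht)
      (fun x hx => hpde x (hmem x hx) t ht)
      ((hF.uncurry_right t ht).intervalIntegrable_of_Icc hL.le), hbc1 t ht, hbc2 t ht]
    linear_combination 2 * φ 0 t * hbc3 t ht
  have hfubini := intervalIntegral_integral_swap_of_continuousOn hL.le hT.le hF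
  rw [integral_congr htime, integral_congr hspace, intervalIntegral.integral_neg,
    intervalIntegral.integral_sub] at hfubini
  · linarith
  all_goals
    exact ((hcont.uncurry_right _ (by simp [hT.le])).pow 2).intervalIntegrable_of_Icc hL.le

/-- **Energy identity for the adjoint linear KdV system.**
If `φ` is a classical solution of `φ_t + φ_x + φ_{xxx} = 0` on `[0,L] × [0,T]`
with boundary conditions `φ(L,t) = 0`, `φ_x(L,t) = 0`, `φ(0,t) + φ_{xx}(0,t) = 0`, then
`∫₀^L φ(x,T)² dx + ∫₀^T (φ(0,t)² + φ_x(0,t)²) dt = ∫₀^L φ(x,0)² dx`. -/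
theorem adjoint_kdv_energy_identity
    (L T : ℝ) (hL : 0 < L) (hT : 0 < T)
    (φ φt φx φxx φxxx : ℝ → ℝ → ℝ)
    (hφt : ∀ x ∈ Icc (0:ℝ) L, ∀ t ∈ Icc (0:ℝ) T,
      HasDerivAt (fun s => φ x s) (φt x t) t)
    (hφx : ∀ x ∈ Icc (0:ℝ) L, ∀ t ∈ Icc (0:ℝ) T,
      HasDerivAt (fun y => φ y t) (φx x t) x)
    (hφxx : ∀ x ∈ Icc (0:ℝ) L, ∀ t ∈ Icc (0:ℝ) T,
      HasDerivAt (fun y => φx y t) (φxx x t) x)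
    (hφxxx : ∀ x ∈ Icc (0:ℝ) L, ∀ t ∈ Icc (0:ℝ) T,
      HasDerivAt (fun y => φxx y t) (φxxx x t) x)
    (hcont : ContinuousOn (fun p : ℝ × ℝ => φ p.1 p.2) (Icc 0 L ×ˢ Icc 0 T))
    (hcontt : ContinuousOn (fun p : ℝ × ℝ => φt p.1 p.2) (Icc 0 L ×ˢ Icc 0 T))
    (hcontx : ContinuousOn (fun p : ℝ × ℝ => φx p.1 p.2) (Icc 0 L ×ˢ Icc 0 T))
    (hcontxx : ContinuousOn (fun p : ℝ × ℝ => φxx p.1 p.2) (Icc 0 L ×ˢ Icc 0 T))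
    (hcontxxx : ContinuousOn (fun p : ℝ × ℝ => φxxx p.1 p.2) (Icc 0 L ×ˢ Icc 0 T))
    (hpde : ∀ x ∈ Icc (0:ℝ) L, ∀ t ∈ Icc (0:ℝ) T,
      φt x t + φx x t + φxxx x t = 0)
    (hbc1 : ∀ t ∈ Icc (0:ℝ) T, φ L t = 0)
    (hbc2 : ∀ t ∈ Icc (0:ℝ) T, φx L t = 0)
    (hbc3 : ∀ t ∈ Icc (0:ℝ) T, φ 0 t + φxx 0 t = 0) :
    (∫ x in (0:ℝ)..L, (φ x T) ^ 2)
      + (∫ t in (0:ℝ)..T, ((φ 0 t) ^ 2 + (φx 0 t) ^ 2))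
      = ∫ x in (0:ℝ)..L, (φ x 0) ^ 2 :=
  adjoint_kdv_energy_identity_general L T hL hT φ φt φx φxx φxxx hφt hφx hφxx hφxxx hcont hcontt
    hpde hbc1 hbc2 hbc3
end

section
/- Let L > 0 and T > 0. There exists a constant C > 0, depending only on L and T, such that every classical solution φ on [0,L]×[0,T] of the adjoint linear KdV system φ_t + φ_x + φ_{xxx} = 0 with boundary conditions φ(L,t) = 0, φ_x(L,t) = 0 and φ(0,t) + φ_{xx}(0,t) = 0 satisfies, for every t ∈ [0,T], ∫₀^L φ(x,t)² dx ≤ C ∫₀^L φ(x,0)² dx, and moreover ∫₀^T ( φ(0,t)² + φ_x(0,t)² ) dt ≤ C ∫₀^L φ(x,0)² dx. -/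
/-! The `L²` energy `E(t) = ∫₀^L φ(x,t)² dx` is dissipated exactly through the left boundary:
multiplying the equation by `2φ` and integrating by parts, the boundary conditions turn
`∫₀^L 2φ(φ_x + φ_xxx) dx` into `φ(0,t)² + φ_x(0,t)²`, so `E' = -(φ(0,t)² + φ_x(0,t)²)`.
Hence `E` is nonincreasing and `∫₀^T (φ(0,t)² + φ_x(0,t)²) dt = E(0) - E(T) ≤ E(0)`,
and `C = 1` works. -/

open MeasureTheory Set Function Filter
open scoped Interval

section ParametricIntegral

variable {F F' : ℝ → ℝ → ℝ} {a b c d : ℝ}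

theorem continuousOn_intervalIntegral_of_continuousOn_prod (hab : a ≤ b)
    (hF : ContinuousOn (uncurry F) (Icc a b ×ˢ Icc c d)) :
    ContinuousOn (fun t => ∫ x in a..b, F x t) (Icc c d) := by
  have hΙ : Ι a b ⊆ Icc a b := uIoc_of_le hab ▸ Ioc_subset_Icc_self
  obtain ⟨M, hM⟩ := (isCompact_Icc.prod isCompact_Icc).exists_bound_of_continuousOn hF
  intro t₀ ht₀
  refine intervalIntegral.continuousWithinAt_of_dominated_interval (bound := fun _ => M) ?_ ?_
    intervalIntegrable_const (ae_of_all _ fun x hx => (hF.uncurry_left x (hΙ hx)) t₀ ht₀)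
  · filter_upwards [self_mem_nhdsWithin] with t ht
    exact ((hF.uncurry_right t ht).mono hΙ).aestronglyMeasurable measurableSet_uIoc
  · filter_upwards [self_mem_nhdsWithin] with t ht
    exact ae_of_all _ fun x hx => hM (x, t) ⟨hΙ hx, ht⟩

theorem hasDerivAt_intervalIntegral_of_continuousOn_prod (hab : a ≤ b)
    (hF : ContinuousOn (uncurry F) (Icc a b ×ˢ Icc c d))
    (hF' : ContinuousOn (uncurry F') (Icc a b ×ˢ Icc c d))
    (hderiv : ∀ x ∈ Icc a b, ∀ t ∈ Ioo c d, HasDerivAt (F x) (F' x t) t)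
    {t₀ : ℝ} (ht₀ : t₀ ∈ Ioo c d) :
    HasDerivAt (fun t => ∫ x in a..b, F x t) (∫ x in a..b, F' x t₀) t₀ := by
  have hΙ : Ι a b ⊆ Icc a b := uIoc_of_le hab ▸ Ioc_subset_Icc_self
  have hslice : ∀ {G : ℝ → ℝ → ℝ}, ContinuousOn (uncurry G) (Icc a b ×ˢ Icc c d) →
      ∀ t ∈ Ioo c d, AEStronglyMeasurable (G · t) (volume.restrict (Ι a b)) :=
    fun hG t ht => ((hG.uncurry_right t (Ioo_subset_Icc_self ht)).mono hΙ).aestronglyMeasurable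
      measurableSet_uIoc
  obtain ⟨M, hM⟩ := (isCompact_Icc.prod isCompact_Icc).exists_bound_of_continuousOn hF'
  refine (intervalIntegral.hasDerivAt_integral_of_dominated_loc_of_deriv_le
    (F := fun t x => F x t) (F' := fun t x => F' x t) (bound := fun _ => M)
    (Ioo_mem_nhds ht₀.1 ht₀.2)
    (eventually_of_mem (Ioo_mem_nhds ht₀.1 ht₀.2) (hslice hF))
    ((hF.uncurry_right t₀ (Ioo_subset_Icc_self ht₀)).intervalIntegrable_of_Icc hab)
    (hslice hF' t₀ ht₀) ?_ intervalIntegrable_const ?_).2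
  · exact ae_of_all _ fun x hx t ht => hM (x, t) ⟨hΙ hx, Ioo_subset_Icc_self ht⟩
  · exact ae_of_all _ fun x hx t ht => hderiv x (hΙ hx) t ht

end ParametricIntegral

theorem integral_two_mul_add_third_deriv {u u₁ u₂ u₃ : ℝ → ℝ} {a b : ℝ} (hab : a ≤ b)
    (hu : ∀ x ∈ Icc a b, HasDerivAt u (u₁ x) x) (hu₁ : ∀ x ∈ Icc a b, HasDerivAt u₁ (u₂ x) x)
    (hu₂ : ∀ x ∈ Icc a b, HasDerivAt u₂ (u₃ x) x) (hu₃ : ContinuousOn u₃ (Icc a b)) :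
    ∫ x in a..b, 2 * u x * (u₁ x + u₃ x) =
      (u b ^ 2 + 2 * u b * u₂ b - u₁ b ^ 2) - (u a ^ 2 + 2 * u a * u₂ a - u₁ a ^ 2) := by
  rw [← uIcc_of_le hab] at hu hu₁ hu₂ hu₃
  have hcont : ∀ {v v' : ℝ → ℝ}, (∀ x ∈ [[a, b]], HasDerivAt v (v' x) x) →
      ContinuousOn v [[a, b]] :=
    fun hv x hx => (hv x hx).continuousAt.continuousWithinAt
  refine intervalIntegral.integral_eq_sub_of_hasDerivAt
    (f := fun y => u y ^ 2 + 2 * u y * u₂ y - u₁ y ^ 2) (fun x hx => ?_) ?_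
  · refine ((((hu x hx).fun_pow 2).fun_add (((hu x hx).const_mul 2).fun_mul (hu₂ x hx))).fun_sub
      ((hu₁ x hx).fun_pow 2)).congr_deriv ?_
    push_cast
    ring
  · exact ((continuousOn_const.mul (hcont hu)).mul ((hcont hu₁).add hu₃)).intervalIntegrable

structure IsAdjointKdVSolution (L T : ℝ) (φ φt φx φxx φxxx : ℝ → ℝ → ℝ) : Prop where
  hasDerivAt_t : ∀ x ∈ Icc 0 L, ∀ t ∈ Icc 0 T, HasDerivAt (φ x) (φt x t) t
  hasDerivAt_x : ∀ x ∈ Icc 0 L, ∀ t ∈ Icc 0 T, HasDerivAt (φ · t) (φx x t) x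
  hasDerivAt_xx : ∀ x ∈ Icc 0 L, ∀ t ∈ Icc 0 T, HasDerivAt (φx · t) (φxx x t) x
  hasDerivAt_xxx : ∀ x ∈ Icc 0 L, ∀ t ∈ Icc 0 T, HasDerivAt (φxx · t) (φxxx x t) x
  continuousOn : ContinuousOn (uncurry φ) (Icc 0 L ×ˢ Icc 0 T)
  continuousOn_t : ContinuousOn (uncurry φt) (Icc 0 L ×ˢ Icc 0 T)
  continuousOn_x : ContinuousOn (uncurry φx) (Icc 0 L ×ˢ Icc 0 T)
  continuousOn_xxx : ContinuousOn (uncurry φxxx) (Icc 0 L ×ˢ Icc 0 T)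
  equation : ∀ x ∈ Icc 0 L, ∀ t ∈ Icc 0 T, φt x t + φx x t + φxxx x t = 0
  right_eq_zero : ∀ t ∈ Icc 0 T, φ L t = 0
  right_x_eq_zero : ∀ t ∈ Icc 0 T, φx L t = 0
  left_add_xx_eq_zero : ∀ t ∈ Icc 0 T, φ 0 t + φxx 0 t = 0

namespace IsAdjointKdVSolution

variable {L T : ℝ} {φ φt φx φxx φxxx : ℝ → ℝ → ℝ}

theorem integral_two_mul_spatial_eq_trace (h : IsAdjointKdVSolution L T φ φt φx φxx φxxx) (hL : 0 ≤ L)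
    {t : ℝ} (ht : t ∈ Icc 0 T) :
    ∫ x in 0..L, 2 * φ x t * (φx x t + φxxx x t) = φ 0 t ^ 2 + φx 0 t ^ 2 := by
  have hφxx : φxx 0 t = -φ 0 t := by linarith [h.left_add_xx_eq_zero t ht]
  rw [integral_two_mul_add_third_deriv hL (h.hasDerivAt_x · · t ht) (h.hasDerivAt_xx · · t ht)
    (h.hasDerivAt_xxx · · t ht) (h.continuousOn_xxx.uncurry_right t ht), h.right_eq_zero t ht,
    h.right_x_eq_zero t ht, hφxx]
  ring

theorem continuousOn_energy (h : IsAdjointKdVSolution L T φ φt φx φxx φxxx) (hL : 0 ≤ L) :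
    ContinuousOn (fun s => ∫ x in 0..L, φ x s ^ 2) (Icc 0 T) :=
  continuousOn_intervalIntegral_of_continuousOn_prod hL (by exact h.continuousOn.pow 2)

theorem hasDerivAt_energy (h : IsAdjointKdVSolution L T φ φt φx φxx φxxx) (hL : 0 ≤ L) {t : ℝ}
    (ht : t ∈ Ioo 0 T) :
    HasDerivAt (fun s => ∫ x in 0..L, φ x s ^ 2) (-(φ 0 t ^ 2 + φx 0 t ^ 2)) t := by
  have ht' : t ∈ Icc 0 T := Ioo_subset_Icc_self ht
  have hflux : ∫ x in 0..L, 2 * φ x t * φt x t = -(φ 0 t ^ 2 + φx 0 t ^ 2) := by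
    rw [← h.integral_two_mul_spatial_eq_trace hL ht', ← intervalIntegral.integral_neg]
    refine intervalIntegral.integral_congr fun x hx => ?_
    rw [uIcc_of_le hL] at hx
    linear_combination 2 * φ x t * h.equation x hx t ht'
  rw [← hflux]
  refine hasDerivAt_intervalIntegral_of_continuousOn_prod (F := fun x s => φ x s ^ 2)
    (F' := fun x s => 2 * φ x s * φt x s) hL (by exact h.continuousOn.pow 2)
    (by exact (continuousOn_const.mul h.continuousOn).mul h.continuousOn_t)
    (fun x hx s hs => ?_) ht
  refine ((h.hasDerivAt_t x hx s (Ioo_subset_Icc_self hs)).pow 2).congr_deriv ?_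
  push_cast
  ring

theorem antitoneOn_energy (h : IsAdjointKdVSolution L T φ φt φx φxx φxxx) (hL : 0 ≤ L) :
    AntitoneOn (fun s => ∫ x in 0..L, φ x s ^ 2) (Icc 0 T) := by
  refine antitoneOn_of_hasDerivWithinAt_nonpos (f' := fun t => -(φ 0 t ^ 2 + φx 0 t ^ 2))
    (convex_Icc 0 T) (h.continuousOn_energy hL)
    (fun t ht => ?_) (fun t ht => ?_)
  all_goals rw [interior_Icc] at ht
  · exact (h.hasDerivAt_energy hL ht).hasDerivWithinAt
  · have := sq_nonneg (φ 0 t)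
    have := sq_nonneg (φx 0 t)
    linarith

theorem integral_trace_eq (h : IsAdjointKdVSolution L T φ φt φx φxx φxxx) (hL : 0 ≤ L)
    (hT : 0 ≤ T) :
    ∫ t in 0..T, (φ 0 t ^ 2 + φx 0 t ^ 2) =
      (∫ x in 0..L, φ x 0 ^ 2) - ∫ x in 0..L, φ x T ^ 2 := by
  have h0 : (0 : ℝ) ∈ Icc 0 L := left_mem_Icc.2 hL
  have hFTC := intervalIntegral.integral_eq_sub_of_hasDeriv_right_of_le hT
    (h.continuousOn_energy hL)
    (fun t ht => (h.hasDerivAt_energy hL ht).hasDerivWithinAt)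
    ((((h.continuousOn.uncurry_left 0 h0).pow 2).add
      ((h.continuousOn_x.uncurry_left 0 h0).pow 2)).neg.intervalIntegrable_of_Icc hT)
  rw [intervalIntegral.integral_neg] at hFTC
  linarith

end IsAdjointKdVSolution

/-- **Boundedness of the adjoint linear KdV semigroup together with boundary traces.**
There is a constant `C > 0` depending only on `L` and `T` such that every classical solution
`φ` of the adjoint linear KdV system satisfies `∫₀^L φ(x,t)² dx ≤ C ∫₀^L φ(x,0)² dx`
for every `t ∈ [0,T]`, and `∫₀^T (φ(0,t)² + φ_x(0,t)²) dt ≤ C ∫₀^L φ(x,0)² dx`. -/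
theorem adjoint_kdv_bounded_and_trace_estimate
    (L T : ℝ) (hL : 0 < L) (hT : 0 < T) :
    ∃ C : ℝ, 0 < C ∧
      ∀ (φ φt φx φxx φxxx : ℝ → ℝ → ℝ),
        (∀ x ∈ Icc (0:ℝ) L, ∀ t ∈ Icc (0:ℝ) T,
          HasDerivAt (fun s => φ x s) (φt x t) t) →
        (∀ x ∈ Icc (0:ℝ) L, ∀ t ∈ Icc (0:ℝ) T,
          HasDerivAt (fun y => φ y t) (φx x t) x) →
        (∀ x ∈ Icc (0:ℝ) L, ∀ t ∈ Icc (0:ℝ) T,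
          HasDerivAt (fun y => φx y t) (φxx x t) x) →
        (∀ x ∈ Icc (0:ℝ) L, ∀ t ∈ Icc (0:ℝ) T,
          HasDerivAt (fun y => φxx y t) (φxxx x t) x) →
        ContinuousOn (fun p : ℝ × ℝ => φ p.1 p.2) (Icc 0 L ×ˢ Icc 0 T) →
        ContinuousOn (fun p : ℝ × ℝ => φt p.1 p.2) (Icc 0 L ×ˢ Icc 0 T) →
        ContinuousOn (fun p : ℝ × ℝ => φx p.1 p.2) (Icc 0 L ×ˢ Icc 0 T) →
        ContinuousOn (fun p : ℝ × ℝ => φxx p.1 p.2) (Icc 0 L ×ˢ Icc 0 T) →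
        ContinuousOn (fun p : ℝ × ℝ => φxxx p.1 p.2) (Icc 0 L ×ˢ Icc 0 T) →
        (∀ x ∈ Icc (0:ℝ) L, ∀ t ∈ Icc (0:ℝ) T,
          φt x t + φx x t + φxxx x t = 0) →
        (∀ t ∈ Icc (0:ℝ) T, φ L t = 0) →
        (∀ t ∈ Icc (0:ℝ) T, φx L t = 0) →
        (∀ t ∈ Icc (0:ℝ) T, φ 0 t + φxx 0 t = 0) →
          (∀ t ∈ Icc (0:ℝ) T,
            (∫ x in (0:ℝ)..L, (φ x t) ^ 2) ≤ C * ∫ x in (0:ℝ)..L, (φ x 0) ^ 2)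
          ∧ (∫ t in (0:ℝ)..T, ((φ 0 t) ^ 2 + (φx 0 t) ^ 2))
              ≤ C * ∫ x in (0:ℝ)..L, (φ x 0) ^ 2 := by
  refine ⟨1, one_pos, fun φ φt φx φxx φxxx hdt hdx hdxx hdxxx hc hct hcx _ hcxxx hpde hL₀ hLx h₀ =>
    ?_⟩
  have h : IsAdjointKdVSolution L T φ φt φx φxx φxxx :=
    ⟨hdt, hdx, hdxx, hdxxx, hc, hct, hcx, hcxxx, hpde, hL₀, hLx, h₀⟩
  have h0T : (0 : ℝ) ∈ Icc 0 T := left_mem_Icc.2 hT.le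
  refine ⟨fun t ht => ?_, ?_⟩
  · rw [one_mul]
    exact h.antitoneOn_energy hL.le h0T ht ht.1
  · rw [one_mul, h.integral_trace_eq hL.le hT.le, sub_le_self_iff]
    exact intervalIntegral.integral_nonneg hL.le fun x _ => sq_nonneg _
end

section
/- Let L > 0 and T > 0, and let φ be a classical solution on [0,L]×[0,T] of the adjoint linear KdV system φ_t + φ_x + φ_{xxx} = 0 with boundary conditions φ(L,t) = 0, φ_x(L,t) = 0 and φ(0,t) + φ_{xx}(0,t) = 0 for all t ∈ [0,T]. Then ∫₀^L φ(x,0)² dx ≤ (1/T) ∫₀^T ∫₀^L φ(x,t)² dx dt + ∫₀^T φ_x(0,t)² dt + ∫₀^T φ(0,t)² dt. -/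
/-!
Multiplying the equation by `2φ` and integrating by parts in `x` with the flux
`φ² + 2 φ φ_xx - φ_x²`, the boundary conditions give the dissipation identity
`d/dt ∫₀^L φ² = -(φ(0,t)² + φ_x(0,t)²)`. Hence the energy at time `0` exceeds the energy at any
time `s ∈ [0,T]` by at most `∫₀^T (φ(0,t)² + φ_x(0,t)²) dt`, and averaging over `s` gives the
estimate.
-/

open MeasureTheory Set Filter Topology Function Interval

section ParametricIntegral

variable {E : Type*} [NormedAddCommGroup E] [NormedSpace ℝ E]

theorem continuousOn_intervalIntegral_of_continuousOn_uIcc_prod {f : ℝ → ℝ → E} {a b c d : ℝ}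
    (hcd : c ≤ d) (hf : ContinuousOn (uncurry f) (uIcc a b ×ˢ Icc c d)) :
    ContinuousOn (fun t => ∫ x in a..b, f x t) (Icc c d) := by
  -- Clamping both variables with `projIcc` gives a globally continuous function with the same
  -- integrals for `t ∈ [c, d]`.
  set p : ℝ → ℝ := fun x => projIcc (min a b) (max a b) min_le_max x
  set q : ℝ → ℝ := fun t => projIcc c d hcd t
  have hext : Continuous fun tx : ℝ × ℝ => f (p tx.2) (q tx.1) :=
    hf.comp_continuous (f := fun tx : ℝ × ℝ => (p tx.2, q tx.1))
      ((continuous_projIcc.subtype_val.comp continuous_snd).prodMk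
        (continuous_projIcc.subtype_val.comp continuous_fst))
      fun tx => mk_mem_prod (Subtype.mem _) (Subtype.mem _)
  refine (intervalIntegral.continuous_parametric_intervalIntegral_of_continuous'
    (μ := volume) (f := fun t x => f (p x) (q t)) hext a b).continuousOn.congr fun t ht => ?_
  refine intervalIntegral.integral_congr fun x hx => ?_
  simp only [p, q, projIcc_of_mem _ hx, projIcc_of_mem _ ht]

theorem hasDerivAt_intervalIntegral_of_continuousOn_uIcc_prod {F F' : ℝ → ℝ → E}
    {a b t₀ : ℝ} {K : Set ℝ} (hK : IsCompact K) (hK₀ : K ∈ 𝓝 t₀)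
    (hF : ∀ t ∈ K, ContinuousOn (F · t) (uIcc a b))
    (hF' : ContinuousOn (uncurry F') (uIcc a b ×ˢ K))
    (hderiv : ∀ x ∈ uIcc a b, ∀ t ∈ K, HasDerivAt (F x ·) (F' x t) t) :
    HasDerivAt (fun t => ∫ x in a..b, F x t) (∫ x in a..b, F' x t₀) t₀ := by
  obtain ⟨C, hC⟩ := (isCompact_uIcc.prod hK).exists_bound_of_continuousOn hF'
  have ht₀ : t₀ ∈ K := mem_of_mem_nhds hK₀
  have hmeas : ∀ {G : ℝ → E}, ContinuousOn G (uIcc a b) →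
      AEStronglyMeasurable G (volume.restrict (Ι a b)) := fun hG =>
    (hG.mono uIoc_subset_uIcc).aestronglyMeasurable measurableSet_uIoc
  refine (intervalIntegral.hasDerivAt_integral_of_dominated_loc_of_deriv_le (F := fun t x => F x t)
    (F' := fun t x => F' x t) (bound := fun _ => C)
    hK₀ (eventually_of_mem hK₀ fun t ht => hmeas (hF t ht)) ((hF t₀ ht₀).intervalIntegrable)
    (hmeas (G := (F' · t₀)) (hF'.uncurry_right t₀ ht₀)) ?_ intervalIntegrable_const ?_).2
  · exact ae_of_all _ fun x hx t ht => hC (x, t) ⟨uIoc_subset_uIcc hx, ht⟩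
  · exact ae_of_all _ fun x hx t ht => hderiv x (uIoc_subset_uIcc hx) t ht

end ParametricIntegral

theorem integral_two_mul_add_third_deriv_eq {u u' u'' u''' : ℝ → ℝ} {a b : ℝ}
    (hu : ∀ x ∈ uIcc a b, HasDerivAt u (u' x) x)
    (hu' : ∀ x ∈ uIcc a b, HasDerivAt u' (u'' x) x)
    (hu'' : ∀ x ∈ uIcc a b, HasDerivAt u'' (u''' x) x)
    (hint : IntervalIntegrable (fun x => 2 * u x * (u' x + u''' x)) volume a b) :
    ∫ x in a..b, 2 * u x * (u' x + u''' x) =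
      (u b ^ 2 + 2 * u b * u'' b - u' b ^ 2) - (u a ^ 2 + 2 * u a * u'' a - u' a ^ 2) := by
  refine intervalIntegral.integral_eq_sub_of_hasDerivAt
    (f := fun x => u x ^ 2 + 2 * u x * u'' x - u' x ^ 2) (fun x hx => ?_) hint
  have hflux := (((hu x hx).pow 2).add (((hu x hx).const_mul 2).mul (hu'' x hx))).sub
    ((hu' x hx).pow 2)
  refine (hflux : HasDerivAt (fun x => u x ^ 2 + 2 * u x * u'' x - u' x ^ 2) _ x).congr_deriv ?_
  push_cast
  ring

/-- `u = φ(·,t)` and `v = φ_t(·,t)` for a solution `φ` of the adjoint KdV system. -/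
theorem integral_two_mul_eq_neg_of_adjoint_kdv {u v u' u'' u''' : ℝ → ℝ} {L : ℝ} (hL : 0 ≤ L)
    (hu : ∀ x ∈ Icc 0 L, HasDerivAt u (u' x) x)
    (hu' : ∀ x ∈ Icc 0 L, HasDerivAt u' (u'' x) x)
    (hu'' : ∀ x ∈ Icc 0 L, HasDerivAt u'' (u''' x) x)
    (huv : ContinuousOn (fun x => u x * v x) (Icc 0 L))
    (hpde : ∀ x ∈ Icc 0 L, v x + u' x + u''' x = 0)
    (huL : u L = 0) (hu'L : u' L = 0) (hu0 : u 0 + u'' 0 = 0) :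
    ∫ x in 0..L, 2 * u x * v x = -(u 0 ^ 2 + u' 0 ^ 2) := by
  rw [← uIcc_of_le hL] at hu hu' hu'' huv hpde
  have hv : ∀ x ∈ uIcc 0 L, v x = -(u' x + u''' x) := fun x hx => by linarith [hpde x hx]
  have hint : IntervalIntegrable (fun x => 2 * u x * (u' x + u''' x)) volume 0 L :=
    ((show ContinuousOn (fun x => -(2 * (u x * v x))) (uIcc 0 L) from
      (continuousOn_const.mul huv).neg).congr fun x hx => by
        simp only [hv x hx]; ring).intervalIntegrable
  rw [intervalIntegral.integral_congr (g := fun x => -(2 * u x * (u' x + u''' x)))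
      fun x hx => by simp only [hv x hx]; ring,
    intervalIntegral.integral_neg, integral_two_mul_add_third_deriv_eq hu hu' hu'' hint, huL, hu'L,
    show u'' 0 = -u 0 by linarith]
  ring

theorem le_add_integral_of_hasDerivAt_neg {f g : ℝ → ℝ} {a b s : ℝ} (hs : s ∈ Icc a b)
    (hf : ContinuousOn f (Icc a b)) (hf' : ∀ t ∈ Ioo a b, HasDerivAt f (-g t) t)
    (hg : IntervalIntegrable g volume a b) (hg0 : ∀ t ∈ Icc a b, 0 ≤ g t) :
    f a ≤ f s + ∫ t in a..b, g t := by
  have hsub : uIcc a s ⊆ uIcc a b := uIcc_subset_uIcc_left (uIcc_of_le (hs.1.trans hs.2) ▸ hs)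
  have hftc : ∫ t in a..s, -g t = f s - f a :=
    intervalIntegral.integral_eq_sub_of_hasDeriv_right_of_le hs.1
      (hf.mono (Icc_subset_Icc_right hs.2))
      (fun t ht => (hf' t ⟨ht.1, ht.2.trans_le hs.2⟩).hasDerivWithinAt) (hg.mono_set hsub).neg
  have hmono : ∫ t in a..s, g t ≤ ∫ t in a..b, g t :=
    intervalIntegral.integral_mono_interval le_rfl hs.1 hs.2
      ((ae_restrict_iff' measurableSet_Ioc).2
        (ae_of_all _ fun t ht => hg0 t (Ioc_subset_Icc_self ht))) hg
  rw [intervalIntegral.integral_neg] at hftc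
  linarith

theorem le_inv_mul_integral_add_of_forall_le_add {f : ℝ → ℝ} {a b c C : ℝ} (hab : a < b)
    (hf : IntervalIntegrable f volume a b) (h : ∀ s ∈ Icc a b, c ≤ f s + C) :
    c ≤ (b - a)⁻¹ * (∫ s in a..b, f s) + C := by
  have hint : (b - a) * c ≤ (∫ s in a..b, f s) + (b - a) * C := by
    have := intervalIntegral.integral_mono_on hab.le intervalIntegrable_const
      (hf.add intervalIntegrable_const) h
    rwa [intervalIntegral.integral_const, intervalIntegral.integral_add hf intervalIntegrable_const,
      intervalIntegral.integral_const, smul_eq_mul, smul_eq_mul] at this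
  rw [inv_mul_eq_div, ← sub_le_iff_le_add, le_div_iff₀ (sub_pos.2 hab)]
  linarith

theorem adjoint_kdv_initial_estimate_general
    (L T : ℝ) (hL : 0 < L) (hT : 0 < T)
    (φ φt φx φxx φxxx : ℝ → ℝ → ℝ)
    (hφt : ∀ x ∈ Icc (0:ℝ) L, ∀ t ∈ Icc (0:ℝ) T,
      HasDerivAt (fun s => φ x s) (φt x t) t)
    (hφx : ∀ x ∈ Icc (0:ℝ) L, ∀ t ∈ Icc (0:ℝ) T,
      HasDerivAt (fun y => φ y t) (φx x t) x)
    (hφxx : ∀ x ∈ Icc (0:ℝ) L, ∀ t ∈ Icc (0:ℝ) T,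
      HasDerivAt (fun y => φx y t) (φxx x t) x)
    (hφxxx : ∀ x ∈ Icc (0:ℝ) L, ∀ t ∈ Icc (0:ℝ) T,
      HasDerivAt (fun y => φxx y t) (φxxx x t) x)
    (hcont : ContinuousOn (fun p : ℝ × ℝ => φ p.1 p.2) (Icc 0 L ×ˢ Icc 0 T))
    (hcontt : ContinuousOn (fun p : ℝ × ℝ => φt p.1 p.2) (Icc 0 L ×ˢ Icc 0 T))
    (hcontx : ContinuousOn (fun p : ℝ × ℝ => φx p.1 p.2) (Icc 0 L ×ˢ Icc 0 T))
    (hpde : ∀ x ∈ Icc (0:ℝ) L, ∀ t ∈ Icc (0:ℝ) T,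
      φt x t + φx x t + φxxx x t = 0)
    (hbc1 : ∀ t ∈ Icc (0:ℝ) T, φ L t = 0)
    (hbc2 : ∀ t ∈ Icc (0:ℝ) T, φx L t = 0)
    (hbc3 : ∀ t ∈ Icc (0:ℝ) T, φ 0 t + φxx 0 t = 0) :
    (∫ x in (0:ℝ)..L, (φ x 0) ^ 2)
      ≤ (1 / T) * (∫ t in (0:ℝ)..T, ∫ x in (0:ℝ)..L, (φ x t) ^ 2)
        + (∫ t in (0:ℝ)..T, (φx 0 t) ^ 2)
        + (∫ t in (0:ℝ)..T, (φ 0 t) ^ 2) := by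
  have hx : uIcc 0 L = Icc 0 L := uIcc_of_le hL.le
  have h0 : (0:ℝ) ∈ Icc 0 L := left_mem_Icc.2 hL.le
  have hφ0 : IntervalIntegrable (fun t => φ 0 t ^ 2) volume 0 T :=
    ((hcont.uncurry_left 0 h0).pow 2).intervalIntegrable_of_Icc hT.le
  have hφx0 : IntervalIntegrable (fun t => φx 0 t ^ 2) volume 0 T :=
    ((hcontx.uncurry_left 0 h0).pow 2).intervalIntegrable_of_Icc hT.le
  have henergy_cont : ContinuousOn (fun t => ∫ x in 0..L, φ x t ^ 2) (Icc 0 T) :=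
    continuousOn_intervalIntegral_of_continuousOn_uIcc_prod hT.le (hx ▸ hcont.pow 2)
  have hdissipation : ∀ t ∈ Ioo 0 T,
      HasDerivAt (fun t => ∫ x in 0..L, φ x t ^ 2) (-(φ 0 t ^ 2 + φx 0 t ^ 2)) t := by
    intro t ht
    have ht' := Ioo_subset_Icc_self ht
    rw [← integral_two_mul_eq_neg_of_adjoint_kdv hL.le (fun x hx => hφx x hx t ht')
      (fun x hx => hφxx x hx t ht') (fun x hx => hφxxx x hx t ht')
      ((hcont.uncurry_right t ht').mul (hcontt.uncurry_right t ht'))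
      (fun x hx => hpde x hx t ht') (hbc1 t ht') (hbc2 t ht') (hbc3 t ht')]
    exact hasDerivAt_intervalIntegral_of_continuousOn_uIcc_prod
      (F' := fun x s => 2 * φ x s * φt x s) isCompact_Icc (Icc_mem_nhds ht.1 ht.2)
      (fun s hs => hx ▸ (hcont.uncurry_right s hs).pow 2)
      (hx ▸ (continuousOn_const.mul hcont).mul hcontt) fun x hx' s hs =>
        ((hφt x (hx ▸ hx') s hs).pow 2).congr_deriv (by push_cast; ring)
  have hinitial := le_inv_mul_integral_add_of_forall_le_add hT
    (henergy_cont.intervalIntegrable_of_Icc hT.le) fun s hs =>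
      le_add_integral_of_hasDerivAt_neg hs henergy_cont hdissipation (hφ0.add hφx0)
        fun t _ => by positivity
  rw [sub_zero, intervalIntegral.integral_add hφ0 hφx0] at hinitial
  rw [one_div]
  linarith

/-- **Initial-datum estimate for the adjoint linear KdV system.**
If `φ` is a classical solution of `φ_t + φ_x + φ_{xxx} = 0` on `[0,L] × [0,T]`
with boundary conditions `φ(L,t) = 0`, `φ_x(L,t) = 0`, `φ(0,t) + φ_{xx}(0,t) = 0`, then
`∫₀^L φ(x,0)² dx ≤ (1/T) ∫₀^T ∫₀^L φ² dx dt + ∫₀^T φ_x(0,t)² dt + ∫₀^T φ(0,t)² dt`. -/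
theorem adjoint_kdv_initial_estimate
    (L T : ℝ) (hL : 0 < L) (hT : 0 < T)
    (φ φt φx φxx φxxx : ℝ → ℝ → ℝ)
    (hφt : ∀ x ∈ Icc (0:ℝ) L, ∀ t ∈ Icc (0:ℝ) T,
      HasDerivAt (fun s => φ x s) (φt x t) t)
    (hφx : ∀ x ∈ Icc (0:ℝ) L, ∀ t ∈ Icc (0:ℝ) T,
      HasDerivAt (fun y => φ y t) (φx x t) x)
    (hφxx : ∀ x ∈ Icc (0:ℝ) L, ∀ t ∈ Icc (0:ℝ) T,
      HasDerivAt (fun y => φx y t) (φxx x t) x)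
    (hφxxx : ∀ x ∈ Icc (0:ℝ) L, ∀ t ∈ Icc (0:ℝ) T,
      HasDerivAt (fun y => φxx y t) (φxxx x t) x)
    (hcont : ContinuousOn (fun p : ℝ × ℝ => φ p.1 p.2) (Icc 0 L ×ˢ Icc 0 T))
    (hcontt : ContinuousOn (fun p : ℝ × ℝ => φt p.1 p.2) (Icc 0 L ×ˢ Icc 0 T))
    (hcontx : ContinuousOn (fun p : ℝ × ℝ => φx p.1 p.2) (Icc 0 L ×ˢ Icc 0 T))
    (hcontxx : ContinuousOn (fun p : ℝ × ℝ => φxx p.1 p.2) (Icc 0 L ×ˢ Icc 0 T))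
    (hcontxxx : ContinuousOn (fun p : ℝ × ℝ => φxxx p.1 p.2) (Icc 0 L ×ˢ Icc 0 T))
    (hpde : ∀ x ∈ Icc (0:ℝ) L, ∀ t ∈ Icc (0:ℝ) T,
      φt x t + φx x t + φxxx x t = 0)
    (hbc1 : ∀ t ∈ Icc (0:ℝ) T, φ L t = 0)
    (hbc2 : ∀ t ∈ Icc (0:ℝ) T, φx L t = 0)
    (hbc3 : ∀ t ∈ Icc (0:ℝ) T, φ 0 t + φxx 0 t = 0) :
    (∫ x in (0:ℝ)..L, (φ x 0) ^ 2)
      ≤ (1 / T) * (∫ t in (0:ℝ)..T, ∫ x in (0:ℝ)..L, (φ x t) ^ 2)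
        + (∫ t in (0:ℝ)..T, (φx 0 t) ^ 2)
        + (∫ t in (0:ℝ)..T, (φ 0 t) ^ 2) :=
  adjoint_kdv_initial_estimate_general L T hL hT φ φt φx φxx φxxx hφt hφx hφxx hφxxx hcont hcontt
    hcontx hpde hbc1 hbc2 hbc3
end

section
/- Let L > 0 and T > 0, and let ψ be a classical solution on [0,L]×[0,T] of the backward adjoint linear KdV system ψ_t + ψ_x + ψ_{xxx} = 0 with boundary conditions ψ(0,t) = 0, ψ_x(0,t) = 0 and ψ(L,t) + ψ_{xx}(L,t) = 0 for all t ∈ [0,T]. Then ∫₀^L ψ(x,T)² dx ≤ (1/T) ∫₀^T ∫₀^L ψ(x,t)² dx dt + ∫₀^T ψ_x(L,t)² dt + ∫₀^T ψ(L,t)² dt. -/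
/-!
Let `E(t) = ∫₀ᴸ ψ(x,t)² dx`. Multiplying the equation by `2ψ` and integrating by parts
in `x`, the boundary conditions leave only the flux at `x = L`: `E'(t) = ψ_x(L,t)² + ψ(L,t)² ≥ 0`.
So `E(T) ≤ E(t) + ∫₀ᵀ (ψ_x(L,·)² + ψ(L,·)²)` for every `t ∈ [0,T]`, and averaging over
`t` gives the estimate.
-/

open MeasureTheory Set

theorem integral_two_mul_mul_eq_flux_of_kdv {L : ℝ} {u u' u'' u''' v : ℝ → ℝ} (hL : 0 ≤ L)
    (hu : ∀ x ∈ Icc 0 L, HasDerivAt u (u' x) x)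
    (hu' : ∀ x ∈ Icc 0 L, HasDerivAt u' (u'' x) x)
    (hu'' : ∀ x ∈ Icc 0 L, HasDerivAt u'' (u''' x) x)
    (hv : ContinuousOn v (Icc 0 L))
    (heq : ∀ x ∈ Icc 0 L, v x + u' x + u''' x = 0)
    (h₀ : u 0 = 0) (h₀' : u' 0 = 0) (hL' : u L + u'' L = 0) :
    ∫ x in 0..L, 2 * u x * v x = u' L ^ 2 + u L ^ 2 := by
  have hu_cont : ContinuousOn u (Icc 0 L) := fun x hx => (hu x hx).continuousAt.continuousWithinAt
  -- `-(u² + 2 u u'' - u'²)` is an antiderivative of `-2 u (u' + u''') = 2 u v`.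
  have hderiv : ∀ x ∈ uIcc 0 L,
      HasDerivAt (fun y => -(u y ^ 2 + 2 * u y * u'' y - u' y ^ 2)) (2 * u x * v x) x := by
    intro x hx
    rw [uIcc_of_le hL] at hx
    refine ((((hu x hx).pow 2).add (((hu x hx).const_mul 2).mul (hu'' x hx))).sub
      ((hu' x hx).pow 2)).neg.congr_deriv ?_
    linear_combination (-2 * u x) * heq x hx
  rw [intervalIntegral.integral_eq_sub_of_hasDerivAt hderiv
    (((continuousOn_const.mul hu_cont).mul hv).intervalIntegrable_of_Icc hL), h₀, h₀']
  linear_combination (-2 * u L) * hL'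

theorem integral_sub_eq_integral_integral_of_hasDerivAt_right {E : Type*} [NormedAddCommGroup E]
    [NormedSpace ℝ E] [CompleteSpace E] {F F' : ℝ → ℝ → E} {a b c d : ℝ} (hab : a ≤ b)
    (hcd : c ≤ d) (hF : ∀ x ∈ Icc a b, ∀ s ∈ Icc c d, HasDerivAt (F x) (F' x s) s)
    (hF' : ContinuousOn F'.uncurry (Icc a b ×ˢ Icc c d)) :
    ∫ x in a..b, (F x d - F x c) = ∫ s in c..d, ∫ x in a..b, F' x s := by
  have hint : IntegrableOn F'.uncurry (uIoc a b ×ˢ uIoc c d) :=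
    (hF'.integrableOn_compact (isCompact_Icc.prod isCompact_Icc)).mono_set <| prod_mono
      (uIoc_of_le hab ▸ Ioc_subset_Icc_self) (uIoc_of_le hcd ▸ Ioc_subset_Icc_self)
  rw [← intervalIntegral_intervalIntegral_swap hint]
  refine intervalIntegral.integral_congr fun x hx => ?_
  rw [uIcc_of_le hab] at hx
  refine (intervalIntegral.integral_eq_sub_of_hasDerivAt (fun s hs => ?_)
    ((hF'.uncurry_left x hx).intervalIntegrable_of_Icc hcd)).symm
  exact hF x hx s (uIcc_of_le hcd ▸ hs)

theorem le_inv_mul_integral_of_forall_le {f : ℝ → ℝ} {a b y : ℝ} (hab : a < b)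
    (hf : IntervalIntegrable f volume a b) (h : ∀ t ∈ Icc a b, y ≤ f t) :
    y ≤ (b - a)⁻¹ * ∫ t in a..b, f t := by
  rw [le_inv_mul_iff₀ (sub_pos.2 hab), ← smul_eq_mul, ← intervalIntegral.integral_const]
  exact intervalIntegral.integral_mono_on hab.le intervalIntegrable_const hf h

theorem le_inv_mul_integral_add_integral_of_sub_eq_integral {E g : ℝ → ℝ} {a b : ℝ}
    (hab : a < b) (hg : ContinuousOn g (Icc a b)) (hg₀ : ∀ s ∈ Icc a b, 0 ≤ g s)
    (hE : ∀ t ∈ Icc a b, E b - E t = ∫ s in t..b, g s) :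
    E b ≤ (b - a)⁻¹ * (∫ t in a..b, E t) + ∫ s in a..b, g s := by
  have hg_int : IntegrableOn g (uIcc a b) := uIcc_of_le hab.le ▸ hg.integrableOn_Icc
  have hE_cont : ContinuousOn E (Icc a b) :=
    (continuousOn_const (c := E b) |>.sub
      (uIcc_of_le hab.le ▸ intervalIntegral.continuousOn_primitive_interval_left hg_int)).congr
      fun t ht => by rw [Pi.sub_apply, ← hE t ht, sub_sub_cancel]
  have hE_le : ∀ t ∈ Icc a b, E b ≤ E t + ∫ s in a..b, g s := fun t ht => by
    have : ∫ s in t..b, g s ≤ ∫ s in a..b, g s :=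
      intervalIntegral.integral_mono_interval ht.1 ht.2 le_rfl
        ((ae_restrict_iff' measurableSet_Ioc).2
          (.of_forall fun s hs => hg₀ s (Ioc_subset_Icc_self hs)))
        hg_int.intervalIntegrable
    linarith [hE t ht]
  have hE_int : IntervalIntegrable E volume a b := hE_cont.intervalIntegrable_of_Icc hab.le
  have := le_inv_mul_integral_of_forall_le hab (hE_int.add intervalIntegrable_const) hE_le
  rwa [intervalIntegral.integral_add hE_int intervalIntegrable_const,
    intervalIntegral.integral_const, smul_eq_mul, mul_add,
    inv_mul_cancel_left₀ (sub_pos.2 hab).ne'] at this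

theorem backward_adjoint_kdv_terminal_estimate_general
    (L T : ℝ) (hL : 0 < L) (hT : 0 < T)
    (ψ ψt ψx ψxx ψxxx : ℝ → ℝ → ℝ)
    (hψt : ∀ x ∈ Icc (0:ℝ) L, ∀ t ∈ Icc (0:ℝ) T,
      HasDerivAt (fun s => ψ x s) (ψt x t) t)
    (hψx : ∀ x ∈ Icc (0:ℝ) L, ∀ t ∈ Icc (0:ℝ) T,
      HasDerivAt (fun y => ψ y t) (ψx x t) x)
    (hψxx : ∀ x ∈ Icc (0:ℝ) L, ∀ t ∈ Icc (0:ℝ) T,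
      HasDerivAt (fun y => ψx y t) (ψxx x t) x)
    (hψxxx : ∀ x ∈ Icc (0:ℝ) L, ∀ t ∈ Icc (0:ℝ) T,
      HasDerivAt (fun y => ψxx y t) (ψxxx x t) x)
    (hcont : ContinuousOn (fun p : ℝ × ℝ => ψ p.1 p.2) (Icc 0 L ×ˢ Icc 0 T))
    (hcontt : ContinuousOn (fun p : ℝ × ℝ => ψt p.1 p.2) (Icc 0 L ×ˢ Icc 0 T))
    (hcontx : ContinuousOn (fun p : ℝ × ℝ => ψx p.1 p.2) (Icc 0 L ×ˢ Icc 0 T))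
    (hpde : ∀ x ∈ Icc (0:ℝ) L, ∀ t ∈ Icc (0:ℝ) T,
      ψt x t + ψx x t + ψxxx x t = 0)
    (hbc1 : ∀ t ∈ Icc (0:ℝ) T, ψ 0 t = 0)
    (hbc2 : ∀ t ∈ Icc (0:ℝ) T, ψx 0 t = 0)
    (hbc3 : ∀ t ∈ Icc (0:ℝ) T, ψ L t + ψxx L t = 0) :
    (∫ x in (0:ℝ)..L, (ψ x T) ^ 2)
      ≤ (1 / T) * (∫ t in (0:ℝ)..T, ∫ x in (0:ℝ)..L, (ψ x t) ^ 2)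
        + (∫ t in (0:ℝ)..T, (ψx L t) ^ 2)
        + (∫ t in (0:ℝ)..T, (ψ L t) ^ 2) := by
  have hL_mem : L ∈ Icc 0 L := right_mem_Icc.2 hL.le
  have hψ_sq_int (t) (ht : t ∈ Icc 0 T) : IntervalIntegrable (fun x => ψ x t ^ 2) volume 0 L :=
    ((hcont.uncurry_right (f := ψ) t ht).pow 2).intervalIntegrable_of_Icc hL.le
  have hboundary_sq_int (f : ℝ → ℝ → ℝ) (hf : ContinuousOn f.uncurry (Icc 0 L ×ˢ Icc 0 T)) :
      IntervalIntegrable (fun t => f L t ^ 2) volume 0 T :=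
    ((hf.uncurry_left L hL_mem).pow 2).intervalIntegrable_of_Icc hT.le
  have flux (s) (hs : s ∈ Icc 0 T) :
      ∫ x in 0..L, 2 * ψ x s * ψt x s = ψx L s ^ 2 + ψ L s ^ 2 :=
    integral_two_mul_mul_eq_flux_of_kdv (u := (ψ · s)) (u' := (ψx · s)) (u'' := (ψxx · s))
      hL.le (hψx · · s hs) (hψxx · · s hs) (hψxxx · · s hs)
      (hcontt.uncurry_right (f := ψt) s hs) (hpde · · s hs) (hbc1 s hs) (hbc2 s hs) (hbc3 s hs)
  have energy (t) (ht : t ∈ Icc 0 T) : (∫ x in 0..L, ψ x T ^ 2) - ∫ x in 0..L, ψ x t ^ 2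
      = ∫ s in t..T, (ψx L s ^ 2 + ψ L s ^ 2) := by
    have hsub : Icc t T ⊆ Icc 0 T := Icc_subset_Icc_left ht.1
    rw [← intervalIntegral.integral_sub (hψ_sq_int T (right_mem_Icc.2 hT.le)) (hψ_sq_int t ht),
      integral_sub_eq_integral_integral_of_hasDerivAt_right (F := fun x s => ψ x s ^ 2)
        (F' := fun x s => 2 * ψ x s * ψt x s) hL.le ht.2
        (fun x hx s hs => ((hψt x hx s (hsub hs)).fun_pow 2).congr_deriv (by ring))
        (((continuousOn_const.fun_mul hcont).fun_mul hcontt).mono (prod_mono subset_rfl hsub))]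
    exact intervalIntegral.integral_congr fun s hs => flux s (hsub (uIcc_of_le ht.2 ▸ hs))
  have := le_inv_mul_integral_add_integral_of_sub_eq_integral
    (E := fun t => ∫ x in 0..L, ψ x t ^ 2) (g := fun s => ψx L s ^ 2 + ψ L s ^ 2) hT
    (((hcontx.uncurry_left (f := ψx) L hL_mem).pow 2).add
      ((hcont.uncurry_left (f := ψ) L hL_mem).pow 2))
    (fun s _ => by positivity) energy
  rwa [sub_zero, inv_eq_one_div, intervalIntegral.integral_add (hboundary_sq_int ψx hcontx)
    (hboundary_sq_int ψ hcont), ← add_assoc] at this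

/-- **Terminal-datum estimate for the backward adjoint linear KdV system.**
If `ψ` is a classical solution of `ψ_t + ψ_x + ψ_{xxx} = 0` on `[0,L] × [0,T]`
with boundary conditions `ψ(0,t) = 0`, `ψ_x(0,t) = 0`, `ψ(L,t) + ψ_{xx}(L,t) = 0`, then
`∫₀^L ψ(x,T)² dx ≤ (1/T) ∫₀^T ∫₀^L ψ² dx dt + ∫₀^T ψ_x(L,t)² dt + ∫₀^T ψ(L,t)² dt`. -/
theorem backward_adjoint_kdv_terminal_estimate
    (L T : ℝ) (hL : 0 < L) (hT : 0 < T)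
    (ψ ψt ψx ψxx ψxxx : ℝ → ℝ → ℝ)
    (hψt : ∀ x ∈ Icc (0:ℝ) L, ∀ t ∈ Icc (0:ℝ) T,
      HasDerivAt (fun s => ψ x s) (ψt x t) t)
    (hψx : ∀ x ∈ Icc (0:ℝ) L, ∀ t ∈ Icc (0:ℝ) T,
      HasDerivAt (fun y => ψ y t) (ψx x t) x)
    (hψxx : ∀ x ∈ Icc (0:ℝ) L, ∀ t ∈ Icc (0:ℝ) T,
      HasDerivAt (fun y => ψx y t) (ψxx x t) x)
    (hψxxx : ∀ x ∈ Icc (0:ℝ) L, ∀ t ∈ Icc (0:ℝ) T,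
      HasDerivAt (fun y => ψxx y t) (ψxxx x t) x)
    (hcont : ContinuousOn (fun p : ℝ × ℝ => ψ p.1 p.2) (Icc 0 L ×ˢ Icc 0 T))
    (hcontt : ContinuousOn (fun p : ℝ × ℝ => ψt p.1 p.2) (Icc 0 L ×ˢ Icc 0 T))
    (hcontx : ContinuousOn (fun p : ℝ × ℝ => ψx p.1 p.2) (Icc 0 L ×ˢ Icc 0 T))
    (hcontxx : ContinuousOn (fun p : ℝ × ℝ => ψxx p.1 p.2) (Icc 0 L ×ˢ Icc 0 T))
    (hcontxxx : ContinuousOn (fun p : ℝ × ℝ => ψxxx p.1 p.2) (Icc 0 L ×ˢ Icc 0 T))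
    (hpde : ∀ x ∈ Icc (0:ℝ) L, ∀ t ∈ Icc (0:ℝ) T,
      ψt x t + ψx x t + ψxxx x t = 0)
    (hbc1 : ∀ t ∈ Icc (0:ℝ) T, ψ 0 t = 0)
    (hbc2 : ∀ t ∈ Icc (0:ℝ) T, ψx 0 t = 0)
    (hbc3 : ∀ t ∈ Icc (0:ℝ) T, ψ L t + ψxx L t = 0) :
    (∫ x in (0:ℝ)..L, (ψ x T) ^ 2)
      ≤ (1 / T) * (∫ t in (0:ℝ)..T, ∫ x in (0:ℝ)..L, (ψ x t) ^ 2)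
        + (∫ t in (0:ℝ)..T, (ψx L t) ^ 2)
        + (∫ t in (0:ℝ)..T, (ψ L t) ^ 2) :=
  backward_adjoint_kdv_terminal_estimate_general L T hL hT ψ ψt ψx ψxx ψxxx hψt hψx hψxx hψxxx hcont
    hcontt hcontx hpde hbc1 hbc2 hbc3
end

section
/- Let L > 0 be a real number and let λ ∈ ℂ satisfy 4 + 27λ² ≠ 0 (so that the characteristic polynomial μ³ + μ + λ has three pairwise distinct complex roots). Suppose φ : ℝ → ℂ is three times continuously differentiable, is not identically zero on [0,L], and satisfies λ φ(x) = −φ′(x) − φ‴(x) for all x ∈ [0,L] together with the boundary conditions φ(0) = 0, φ′(0) = 0, φ(L) + φ″(L) = 0 and φ′(L) = 0. Then L ∈ 𝔽, i.e., there exist a, b ∈ ℂ with a ≠ 0, b ≠ 0, a + b ≠ 0, L² = −(a² + ab + b²) and e^a/a² = e^b/b² = e^{−(a+b)}/(a+b)². -/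
/-!
Since `4 + 27λ²` is minus the discriminant of `μ³ + μ + λ`, its roots `μ₁, μ₂, μ₃` are distinct,
with `μ₁ + μ₂ + μ₃ = 0` and `μ₁μ₂ + μ₁μ₃ + μ₂μ₃ = 1`. By uniqueness for the equivalent first-order
system, an eigenfunction with `φ(0) = φ'(0) = 0` equals `k ∑ (μⱼ - μₖ) e^{μᵢ x}` on `[0, L]`, with
`k ≠ 0` since `φ ≢ 0`. The two boundary conditions at `L` are linear relations between the
`Eᵢ = e^{μᵢ L}`; eliminating with Vieta's relations gives `μᵢ ≠ 0` and `μⱼ² Eᵢ = μᵢ² Eⱼ`, so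
`a = L μ₁`, `b = L μ₂` (with `a + b = -L μ₃`) witness `L ∈ 𝔽`.
-/

open Set

section DepressedCubic

variable {p q μ₁ μ₂ μ₃ : ℂ}

theorem exists_vieta_roots_of_depressed_cubic (p q : ℂ) :
    ∃ μ₁ μ₂ μ₃ : ℂ, μ₁ + μ₂ + μ₃ = 0 ∧ μ₁ * μ₂ + μ₁ * μ₃ + μ₂ * μ₃ = p ∧ μ₁ * μ₂ * μ₃ = -q := by
  obtain ⟨μ, hμ⟩ : ∃ μ : ℂ, μ ^ 3 + p * μ + q = 0 := by
    have hdeg : (Polynomial.X ^ 3 + Polynomial.C p * Polynomial.X + Polynomial.C q :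
        Polynomial ℂ).degree = 3 := by compute_degree!
    obtain ⟨μ, hμ⟩ := Complex.exists_root (by rw [hdeg]; norm_num)
    exact ⟨μ, by simpa using hμ⟩
  -- the other two roots solve `x² + μ x + (p + μ²) = 0`
  obtain ⟨s, hs⟩ := IsAlgClosed.exists_pow_nat_eq (μ ^ 2 - 4 * (p + μ ^ 2)) two_pos
  refine ⟨μ, (-μ + s) / 2, (-μ - s) / 2, by ring, by linear_combination (-1 / 4 : ℂ) * hs, ?_⟩
  linear_combination (-μ / 4) * hs + hμ

theorem cubic_eq_prod_of_vieta (hsum : μ₁ + μ₂ + μ₃ = 0)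
    (hp : μ₁ * μ₂ + μ₁ * μ₃ + μ₂ * μ₃ = p) (hq : μ₁ * μ₂ * μ₃ = -q) (x : ℂ) :
    x ^ 3 + p * x + q = (x - μ₁) * (x - μ₂) * (x - μ₃) := by
  linear_combination x ^ 2 * hsum - x * hp + hq

theorem sq_vandermonde_of_vieta (hsum : μ₁ + μ₂ + μ₃ = 0)
    (hp : μ₁ * μ₂ + μ₁ * μ₃ + μ₂ * μ₃ = p) (hq : μ₁ * μ₂ * μ₃ = -q) :
    ((μ₁ - μ₂) * (μ₂ - μ₃) * (μ₃ - μ₁)) ^ 2 = -(4 * p ^ 3 + 27 * q ^ 2) := by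
  obtain rfl : μ₃ = -μ₁ - μ₂ := by linear_combination hsum
  subst hp
  obtain rfl : q = μ₁ * μ₂ * (μ₁ + μ₂) := by linear_combination hq
  ring

end DepressedCubic

section ThirdOrderODE

noncomputable def jet (f : ℝ → ℂ) (x : ℝ) : ℂ × ℂ × ℂ := (f x, deriv f x, deriv (deriv f) x)

/-- The first-order system of `y''' + p y' + q y = 0` acting on `(y, y', y'')`. -/
noncomputable def companion (p q : ℂ) : (ℂ × ℂ × ℂ) →L[ℂ] ℂ × ℂ × ℂ :=
  let y₀ := ContinuousLinearMap.fst ℂ ℂ (ℂ × ℂ)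
  let y₁ := (ContinuousLinearMap.fst ℂ ℂ ℂ).comp (ContinuousLinearMap.snd ℂ ℂ (ℂ × ℂ))
  let y₂ := (ContinuousLinearMap.snd ℂ ℂ ℂ).comp (ContinuousLinearMap.snd ℂ ℂ (ℂ × ℂ))
  y₁.prod (y₂.prod (-(p • y₁) - q • y₀))

theorem companion_apply (p q : ℂ) (y : ℂ × ℂ × ℂ) :
    companion p q y = (y.2.1, y.2.2, -(p * y.2.1) - q * y.1) := by
  simp [companion]

variable {p q : ℂ} {f g : ℝ → ℂ}

theorem hasDerivAt_jet (hf : ContDiff ℝ 3 f) (x : ℝ) :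
    HasDerivAt (jet f) (deriv f x, deriv (deriv f) x, deriv (deriv (deriv f)) x) x := by
  have h₁ : ContDiff ℝ 2 (deriv f) := hf.deriv'
  have h₂ : ContDiff ℝ 1 (deriv (deriv f)) := h₁.deriv'
  exact ((hf.differentiable (by norm_num)).differentiableAt.hasDerivAt).prodMk
    (((h₁.differentiable (by norm_num)).differentiableAt.hasDerivAt).prodMk
      (h₂.differentiable one_ne_zero).differentiableAt.hasDerivAt)

theorem hasDerivAt_jet_of_ode (hf : ContDiff ℝ 3 f) {x : ℝ}
    (hode : deriv (deriv (deriv f)) x = -(p * deriv f x) - q * f x) :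
    HasDerivAt (jet f) (companion p q (jet f x)) x := by
  simpa [companion_apply, jet, hode] using hasDerivAt_jet hf x

theorem eqOn_jet_of_ode {a b : ℝ} (hf : ContDiff ℝ 3 f) (hg : ContDiff ℝ 3 g)
    (hfode : ∀ x ∈ Icc a b, deriv (deriv (deriv f)) x = -(p * deriv f x) - q * f x)
    (hgode : ∀ x ∈ Icc a b, deriv (deriv (deriv g)) x = -(p * deriv g x) - q * g x)
    (ha : jet f a = jet g a) : EqOn (jet f) (jet g) (Icc a b) := by
  have hf' x (hx : x ∈ Icc a b) := hasDerivAt_jet_of_ode hf (hfode x hx)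
  have hg' x (hx : x ∈ Icc a b) := hasDerivAt_jet_of_ode hg (hgode x hx)
  exact ODE_solution_unique (fun _ => (companion p q).lipschitz) (HasDerivAt.continuousOn hf')
    (fun t ht => (hf' t (Ico_subset_Icc_self ht)).hasDerivWithinAt)
    (HasDerivAt.continuousOn hg') (fun t ht => (hg' t (Ico_subset_Icc_self ht)).hasDerivWithinAt)
    ha

end ThirdOrderODE

section ExpSum

variable {ι : Type*} [Fintype ι] (c μ : ι → ℂ)

noncomputable def expSum (x : ℝ) : ℂ := ∑ i, c i * Complex.exp (μ i * x)

theorem hasDerivAt_expSum (x : ℝ) : HasDerivAt (expSum c μ) (expSum (c * μ) μ x) x := by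
  unfold expSum
  refine HasDerivAt.fun_sum fun i _ => ?_
  have h : HasDerivAt (fun y : ℝ => μ i * y) (μ i) x := by
    simpa using (Complex.ofRealCLM.hasDerivAt (x := x)).const_mul (μ i)
  simpa [mul_assoc, mul_comm (μ i)] using (h.cexp).const_mul (c i)

theorem deriv_expSum : deriv (expSum c μ) = expSum (c * μ) μ :=
  funext fun x => (hasDerivAt_expSum c μ x).deriv

theorem contDiff_expSum {n : WithTop ℕ∞} : ContDiff ℝ n (expSum c μ) := by
  unfold expSum
  exact ContDiff.sum fun i _ =>
    contDiff_const.mul (contDiff_const.mul Complex.ofRealCLM.contDiff).cexp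

theorem jet_expSum (x : ℝ) :
    jet (expSum c μ) x = (expSum c μ x, expSum (c * μ) μ x, expSum (c * μ ^ 2) μ x) := by
  simp [jet, deriv_expSum, mul_assoc, sq]

theorem expSum_ode {p q : ℂ} (hμ : ∀ i, μ i ^ 3 + p * μ i + q = 0) (x : ℝ) :
    deriv (deriv (deriv (expSum c μ))) x =
      -(p * deriv (expSum c μ) x) - q * expSum c μ x := by
  simp only [deriv_expSum, expSum, Finset.mul_sum, ← Finset.sum_neg_distrib,
    ← Finset.sum_sub_distrib, Pi.mul_apply]
  refine Finset.sum_congr rfl fun i _ => ?_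
  linear_combination (c i * Complex.exp (μ i * x)) * hμ i

end ExpSum

section KdV

variable {p q μ₁ μ₂ μ₃ : ℂ}

theorem jet_expSum_vandermonde (k μ₁ μ₂ μ₃ : ℂ) (x : ℝ) :
    jet (expSum (k • ![μ₂ - μ₃, μ₃ - μ₁, μ₁ - μ₂]) ![μ₁, μ₂, μ₃]) x =
      (k * ((μ₂ - μ₃) * Complex.exp (μ₁ * x) + (μ₃ - μ₁) * Complex.exp (μ₂ * x)
          + (μ₁ - μ₂) * Complex.exp (μ₃ * x)),
        k * ((μ₂ - μ₃) * μ₁ * Complex.exp (μ₁ * x) + (μ₃ - μ₁) * μ₂ * Complex.exp (μ₂ * x)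
          + (μ₁ - μ₂) * μ₃ * Complex.exp (μ₃ * x)),
        k * ((μ₂ - μ₃) * μ₁ ^ 2 * Complex.exp (μ₁ * x) + (μ₃ - μ₁) * μ₂ ^ 2 * Complex.exp (μ₂ * x)
          + (μ₁ - μ₂) * μ₃ ^ 2 * Complex.exp (μ₃ * x))) := by
  rw [jet_expSum]
  simp only [expSum, Fin.sum_univ_three, Pi.mul_apply, Pi.smul_apply, Pi.pow_apply, smul_eq_mul,
    Matrix.cons_val_zero, Matrix.cons_val_one, Matrix.cons_val_two, Matrix.tail_cons,
    Matrix.head_cons, Prod.mk.injEq]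
  refine ⟨by ring, by ring, by ring⟩

/-- The coefficients `μⱼ - μₖ` make the exponential sum and its derivative vanish at `0`. -/
theorem exists_eqOn_jet_expSum {f : ℝ → ℂ} {L : ℝ}
    (hμ : ∀ x, x ^ 3 + p * x + q = (x - μ₁) * (x - μ₂) * (x - μ₃))
    (hV : (μ₁ - μ₂) * (μ₂ - μ₃) * (μ₃ - μ₁) ≠ 0) (hf : ContDiff ℝ 3 f)
    (hode : ∀ x ∈ Icc 0 L, deriv (deriv (deriv f)) x = -(p * deriv f x) - q * f x)
    (h₀ : f 0 = 0) (h₀' : deriv f 0 = 0) :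
    ∃ k : ℂ, EqOn (jet f)
      (jet (expSum (k • ![μ₂ - μ₃, μ₃ - μ₁, μ₁ - μ₂]) ![μ₁, μ₂, μ₃])) (Icc 0 L) := by
  have hroot : ∀ i, ![μ₁, μ₂, μ₃] i ^ 3 + p * ![μ₁, μ₂, μ₃] i + q = 0 := by
    intro i
    fin_cases i <;> simp [hμ]
  refine ⟨-(deriv (deriv f) 0 / ((μ₁ - μ₂) * (μ₂ - μ₃) * (μ₃ - μ₁))), ?_⟩
  refine eqOn_jet_of_ode hf (contDiff_expSum _ _) hode (fun x _ => expSum_ode _ _ hroot x) ?_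
  rw [jet_expSum_vandermonde, jet, h₀, h₀']
  simp only [Complex.ofReal_zero, mul_zero, Complex.exp_zero, mul_one, Prod.mk.injEq]
  refine ⟨by ring, by ring, ?_⟩
  linear_combination -div_mul_cancel₀ (deriv (deriv f) 0) hV

theorem root_ne_zero_and_sq_mul_eq_of_boundary {E₁ E₂ E₃ : ℂ} (hsum : μ₁ + μ₂ + μ₃ = 0)
    (hp : μ₁ * μ₂ + μ₁ * μ₃ + μ₂ * μ₃ = 1) (h₂₃ : μ₂ ≠ μ₃) (h₃₁ : μ₃ ≠ μ₁) (hE₁ : E₁ ≠ 0)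
    (hd : (μ₂ - μ₃) * μ₁ * E₁ + (μ₃ - μ₁) * μ₂ * E₂ + (μ₁ - μ₂) * μ₃ * E₃ = 0)
    (hn : (μ₂ - μ₃) * (1 + μ₁ ^ 2) * E₁ + (μ₃ - μ₁) * (1 + μ₂ ^ 2) * E₂
      + (μ₁ - μ₂) * (1 + μ₃ ^ 2) * E₃ = 0) :
    μ₁ ≠ 0 ∧ μ₂ ^ 2 * E₁ = μ₁ ^ 2 * E₂ := by
  -- `1 + μ₁² = μ₂ μ₃ + μ₁ (μ₁ + μ₂ + μ₃)`, and cyclically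
  have hn' : (μ₂ - μ₃) * (μ₂ * μ₃) * E₁ + (μ₃ - μ₁) * (μ₃ * μ₁) * E₂
      + (μ₁ - μ₂) * (μ₁ * μ₂) * E₃ = 0 := by
    linear_combination hn + ((μ₂ - μ₃) * E₁ + (μ₃ - μ₁) * E₂ + (μ₁ - μ₂) * E₃) * hp
      - ((μ₂ - μ₃) * μ₁ * E₁ + (μ₃ - μ₁) * μ₂ * E₂ + (μ₁ - μ₂) * μ₃ * E₃) * hsum
  constructor
  · rintro rfl
    have h : (μ₂ - μ₃) * E₁ = 0 := by linear_combination hn' - ((μ₂ - μ₃) * E₁) * hp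
    exact mul_ne_zero (sub_ne_zero.mpr h₂₃) hE₁ h
  · have h : (μ₂ - μ₃) * (μ₃ - μ₁) * (μ₂ ^ 2 * E₁ - μ₁ ^ 2 * E₂) = 0 := by
      linear_combination μ₁ * μ₂ * hd - μ₃ * hn'
        - ((μ₂ - μ₃) * (μ₂ * (μ₁ - μ₃) * E₁ + μ₁ * (μ₃ - μ₁) * E₂)) * hsum
    have hne : (μ₂ - μ₃) * (μ₃ - μ₁) ≠ 0 :=
      mul_ne_zero (sub_ne_zero.mpr h₂₃) (sub_ne_zero.mpr h₃₁)
    exact sub_eq_zero.mp ((mul_eq_zero.mp h).resolve_left hne)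

theorem roots_ne_zero_and_sq_mul_eq_of_boundary {E₁ E₂ E₃ : ℂ} (hsum : μ₁ + μ₂ + μ₃ = 0)
    (hp : μ₁ * μ₂ + μ₁ * μ₃ + μ₂ * μ₃ = 1) (hV : (μ₁ - μ₂) * (μ₂ - μ₃) * (μ₃ - μ₁) ≠ 0)
    (hE₁ : E₁ ≠ 0) (hE₂ : E₂ ≠ 0) (hE₃ : E₃ ≠ 0)
    (hd : (μ₂ - μ₃) * μ₁ * E₁ + (μ₃ - μ₁) * μ₂ * E₂ + (μ₁ - μ₂) * μ₃ * E₃ = 0)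
    (hn : (μ₂ - μ₃) * (1 + μ₁ ^ 2) * E₁ + (μ₃ - μ₁) * (1 + μ₂ ^ 2) * E₂
      + (μ₁ - μ₂) * (1 + μ₃ ^ 2) * E₃ = 0) :
    μ₁ ≠ 0 ∧ μ₂ ≠ 0 ∧ μ₃ ≠ 0 ∧ μ₂ ^ 2 * E₁ = μ₁ ^ 2 * E₂ ∧ μ₃ ^ 2 * E₂ = μ₂ ^ 2 * E₃ := by
  obtain ⟨⟨h₁₂, h₂₃⟩, h₃₁⟩ : (μ₁ ≠ μ₂ ∧ μ₂ ≠ μ₃) ∧ μ₃ ≠ μ₁ := by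
    simpa only [mul_ne_zero_iff, sub_ne_zero] using hV
  obtain ⟨hμ₁, hrel₁₂⟩ := root_ne_zero_and_sq_mul_eq_of_boundary hsum hp h₂₃ h₃₁ hE₁ hd hn
  obtain ⟨hμ₂, hrel₂₃⟩ := root_ne_zero_and_sq_mul_eq_of_boundary (μ₁ := μ₂) (μ₂ := μ₃) (μ₃ := μ₁)
    (E₂ := E₃) (E₃ := E₁) (by linear_combination hsum) (by linear_combination hp) h₃₁ h₁₂ hE₂
    (by linear_combination hd) (by linear_combination hn)
  obtain ⟨hμ₃, -⟩ := root_ne_zero_and_sq_mul_eq_of_boundary (μ₁ := μ₃) (μ₂ := μ₁) (μ₃ := μ₂)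
    (E₂ := E₁) (E₃ := E₂) (by linear_combination hsum) (by linear_combination hp) h₁₂ h₂₃ hE₃
    (by linear_combination hd) (by linear_combination hn)
  exact ⟨hμ₁, hμ₂, hμ₃, hrel₁₂, hrel₂₃⟩

/-- The set `𝔽`. -/
def criticalLengths : Set ℝ :=
  {L | 0 < L ∧ ∃ a b : ℂ, a ≠ 0 ∧ b ≠ 0 ∧ a + b ≠ 0 ∧
    (L : ℂ) ^ 2 = -(a ^ 2 + a * b + b ^ 2) ∧
    Complex.exp a / a ^ 2 = Complex.exp b / b ^ 2 ∧
    Complex.exp b / b ^ 2 = Complex.exp (-(a + b)) / (a + b) ^ 2}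

theorem mem_criticalLengths_of_roots {L : ℝ} (hL : 0 < L) (hsum : μ₁ + μ₂ + μ₃ = 0)
    (hp : μ₁ * μ₂ + μ₁ * μ₃ + μ₂ * μ₃ = 1) (hμ₁ : μ₁ ≠ 0) (hμ₂ : μ₂ ≠ 0) (hμ₃ : μ₃ ≠ 0)
    (h₁₂ : μ₂ ^ 2 * Complex.exp (μ₁ * L) = μ₁ ^ 2 * Complex.exp (μ₂ * L))
    (h₂₃ : μ₃ ^ 2 * Complex.exp (μ₂ * L) = μ₂ ^ 2 * Complex.exp (μ₃ * L)) :
    L ∈ criticalLengths := by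
  have hL₀ : (L : ℂ) ≠ 0 := Complex.ofReal_ne_zero.mpr hL.ne'
  have hab : -((L : ℂ) * μ₁ + L * μ₂) = L * μ₃ := by linear_combination -(L : ℂ) * hsum
  refine ⟨hL, L * μ₁, L * μ₂, mul_ne_zero hL₀ hμ₁, mul_ne_zero hL₀ hμ₂, ?_, ?_, ?_, ?_⟩
  · rw [← neg_ne_zero, hab]
    exact mul_ne_zero hL₀ hμ₃
  · linear_combination ((L : ℂ) ^ 2 * (μ₁ + μ₂)) * hsum - (L : ℂ) ^ 2 * hp
  · rw [div_eq_div_iff (pow_ne_zero 2 (mul_ne_zero hL₀ hμ₁))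
      (pow_ne_zero 2 (mul_ne_zero hL₀ hμ₂)), mul_comm (L : ℂ), mul_comm (L : ℂ)]
    linear_combination (L : ℂ) ^ 2 * h₁₂
  · rw [hab, ← neg_sq ((L : ℂ) * μ₁ + L * μ₂), hab,
      div_eq_div_iff (pow_ne_zero 2 (mul_ne_zero hL₀ hμ₂)) (pow_ne_zero 2 (mul_ne_zero hL₀ hμ₃)),
      mul_comm (L : ℂ), mul_comm (L : ℂ)]
    linear_combination (L : ℂ) ^ 2 * h₂₃

end KdV

/-- **Nonzero eigenfunctions force critical lengths.**
If the boundary eigenvalue problem `λφ = −φ′ − φ‴`, `φ(0) = φ′(0) = 0`,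
`φ(L) + φ″(L) = 0`, `φ′(L) = 0` (with `4 + 27λ² ≠ 0`, so that the characteristic
polynomial `μ³ + μ + λ` has simple roots) has a solution `φ ∈ C³` not identically zero on
`[0,L]`, then `L` belongs to the critical set `𝔽`: there exist `a b ∈ ℂ`, nonzero with
`a + b ≠ 0`, such that `L² = −(a² + ab + b²)` and
`e^a/a² = e^b/b² = e^{−(a+b)}/(a+b)²`. -/
theorem kdv_eigenfunction_implies_critical_length
    (L : ℝ) (hL : 0 < L) (lam : ℂ) (hlam : 4 + 27 * lam ^ 2 ≠ 0)
    (φ : ℝ → ℂ) (hreg : ContDiff ℝ 3 φ)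
    (hne : ∃ x ∈ Icc (0:ℝ) L, φ x ≠ 0)
    (hode : ∀ x ∈ Icc (0:ℝ) L,
      lam * φ x = -(deriv φ x) - deriv (deriv (deriv φ)) x)
    (hbc0 : φ 0 = 0) (hbc0' : deriv φ 0 = 0)
    (hbcL : φ L + deriv (deriv φ) L = 0) (hbcL' : deriv φ L = 0) :
    ∃ a b : ℂ, a ≠ 0 ∧ b ≠ 0 ∧ a + b ≠ 0 ∧
      (L : ℂ) ^ 2 = -(a ^ 2 + a * b + b ^ 2) ∧
      Complex.exp a / a ^ 2 = Complex.exp b / b ^ 2 ∧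
      Complex.exp b / b ^ 2 = Complex.exp (-(a + b)) / (a + b) ^ 2 := by
  obtain ⟨x₀, hx₀, hφx₀⟩ := hne
  obtain ⟨μ₁, μ₂, μ₃, hsum, hp, hq⟩ := exists_vieta_roots_of_depressed_cubic 1 lam
  have hV : (μ₁ - μ₂) * (μ₂ - μ₃) * (μ₃ - μ₁) ≠ 0 := fun h => hlam <| by
    linear_combination
      sq_vandermonde_of_vieta hsum hp hq - ((μ₁ - μ₂) * (μ₂ - μ₃) * (μ₃ - μ₁)) * h
  obtain ⟨k, hk⟩ := exists_eqOn_jet_expSum (cubic_eq_prod_of_vieta hsum hp hq) hV hreg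
    (fun x hx => by linear_combination hode x hx) hbc0 hbc0'
  have hk₀ : k ≠ 0 := by
    rintro rfl
    have hφx₀' := hk hx₀
    rw [jet, jet_expSum_vandermonde, Prod.mk.injEq, zero_mul] at hφx₀'
    exact hφx₀ hφx₀'.1
  have hjetL := hk ⟨hL.le, le_rfl⟩
  rw [jet, jet_expSum_vandermonde, Prod.mk.injEq, Prod.mk.injEq] at hjetL
  obtain ⟨hφL, hφ'L, hφ''L⟩ := hjetL
  obtain ⟨hμ₁, hμ₂, hμ₃, h₁₂, h₂₃⟩ := roots_ne_zero_and_sq_mul_eq_of_boundary hsum hp hV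
    (Complex.exp_ne_zero (μ₁ * L)) (Complex.exp_ne_zero (μ₂ * L)) (Complex.exp_ne_zero (μ₃ * L))
    (mul_left_cancel₀ hk₀ (by linear_combination -hφ'L + hbcL'))
    (mul_left_cancel₀ hk₀ (by linear_combination -hφL - hφ''L + hbcL))
  exact (mem_criticalLengths_of_roots hL hsum hp hμ₁ hμ₂ hμ₃ h₁₂ h₂₃).2
end

section
/- Let L ∈ ℂ and a, b ∈ ℂ satisfy a ≠ 0, b ≠ 0, a + b ≠ 0, a ≠ b, 2a + b ≠ 0, a + 2b ≠ 0 and L² = −(a² + ab + b²). Then there exists (C₁, C₂, C₃) ∈ ℂ³ with (C₁, C₂, C₃) ≠ (0,0,0) satisfying the four linear equations C₁ + C₂ + C₃ = 0; a C₁ + b C₂ − (a+b) C₃ = 0; (L² + a²) e^a C₁ + (L² + b²) e^b C₂ + (L² + (a+b)²) e^{−(a+b)} C₃ = 0; a e^a C₁ + b e^b C₂ − (a+b) e^{−(a+b)} C₃ = 0, if and only if e^a/a² = e^b/b² = e^{−(a+b)}/(a+b)². -/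
/-- **Compatibility of the 4×3 homogeneous boundary system.**
Under the nondegeneracy conditions on `a`, `b` and `L² = −(a² + ab + b²)`, the homogeneous
linear system
`C₁ + C₂ + C₃ = 0`, `aC₁ + bC₂ − (a+b)C₃ = 0`,
`(L²+a²)e^a C₁ + (L²+b²)e^b C₂ + (L²+(a+b)²)e^{−(a+b)} C₃ = 0`,
`ae^a C₁ + be^b C₂ − (a+b)e^{−(a+b)} C₃ = 0`
has a nontrivial solution if and only if `e^a/a² = e^b/b² = e^{−(a+b)}/(a+b)²`. -/
theorem kdv_boundary_system_nontrivial_iff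
    (L a b : ℂ) (ha : a ≠ 0) (hb : b ≠ 0) (hab : a + b ≠ 0) (hne : a ≠ b)
    (h2ab : 2 * a + b ≠ 0) (ha2b : a + 2 * b ≠ 0)
    (hLab : L ^ 2 = -(a ^ 2 + a * b + b ^ 2)) :
    (∃ C₁ C₂ C₃ : ℂ, ¬(C₁ = 0 ∧ C₂ = 0 ∧ C₃ = 0) ∧
        C₁ + C₂ + C₃ = 0 ∧
        a * C₁ + b * C₂ - (a + b) * C₃ = 0 ∧
        (L ^ 2 + a ^ 2) * Complex.exp a * C₁ + (L ^ 2 + b ^ 2) * Complex.exp b * C₂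
          + (L ^ 2 + (a + b) ^ 2) * Complex.exp (-(a + b)) * C₃ = 0 ∧
        a * Complex.exp a * C₁ + b * Complex.exp b * C₂
          - (a + b) * Complex.exp (-(a + b)) * C₃ = 0)
      ↔ (Complex.exp a / a ^ 2 = Complex.exp b / b ^ 2 ∧
          Complex.exp b / b ^ 2 = Complex.exp (-(a + b)) / (a + b) ^ 2) := by
  have hba : a - b ≠ 0 := sub_ne_zero.mpr hne
  set E1 := Complex.exp a with hE1
  set E2 := Complex.exp b with hE2
  set E3 := Complex.exp (-(a + b)) with hE3
  have ha2 : a ^ 2 ≠ 0 := pow_ne_zero 2 ha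
  have hb2 : b ^ 2 ≠ 0 := pow_ne_zero 2 hb
  have hab2 : (a + b) ^ 2 ≠ 0 := pow_ne_zero 2 hab
  constructor
  · rintro ⟨C₁, C₂, C₃, hC, h1, h2, h3, h4⟩
    have hC2 : (a + 2 * b) * C₂ = -((2 * a + b) * C₁) := by
      linear_combination h2 + (a + b) * h1
    have hC3 : (a + 2 * b) * C₃ = (a - b) * C₁ := by
      linear_combination (a + 2 * b) * h1 - hC2
    have hC1 : C₁ ≠ 0 := by
      intro h
      apply hC
      have h2' : C₂ = 0 := by
        have := hC2
        rw [h] at this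
        simpa [ha2b] using this
      have h3' : C₃ = 0 := by
        have := hC3
        rw [h] at this
        simpa [ha2b] using this
      exact ⟨h, h2', h3'⟩
    have P4 : (a * (a + 2 * b) * E1 - b * (2 * a + b) * E2 - (a + b) * (a - b) * E3) * C₁ = 0 := by
      linear_combination (a + 2 * b) * h4 - b * E2 * hC2 + (a + b) * E3 * hC3
    have hP4 : a * (a + 2 * b) * E1 - b * (2 * a + b) * E2 - (a + b) * (a - b) * E3 = 0 :=
      (mul_eq_zero.mp P4).resolve_right hC1
    have P3 : (-(b * (a + b) * (a + 2 * b)) * E1 + a * (a + b) * (2 * a + b) * E2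
        + a * b * (a - b) * E3) * C₁ = 0 := by
      linear_combination (a + 2 * b) * h3 - (L ^ 2 + b ^ 2) * E2 * hC2
        - (L ^ 2 + (a + b) ^ 2) * E3 * hC3
        - ((a + 2 * b) * E1 * C₁ - (2 * a + b) * E2 * C₁ + (a - b) * E3 * C₁) * hLab
    have hP3 : -(b * (a + b) * (a + 2 * b)) * E1 + a * (a + b) * (2 * a + b) * E2
        + a * b * (a - b) * E3 = 0 :=
      (mul_eq_zero.mp P3).resolve_right hC1
    have h23 : (a + b) ^ 2 * E2 = b ^ 2 * E3 := by
      have key : (a - b) * (2 * a + b) * ((a + b) ^ 2 * E2 - b ^ 2 * E3) = 0 := by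
        linear_combination b * (a + b) * hP4 + a * hP3
      have := (mul_eq_zero.mp key).resolve_left (mul_ne_zero hba h2ab)
      linear_combination this
    have h13 : (a + b) ^ 2 * E1 = a ^ 2 * E3 := by
      have key : (a - b) * (a + 2 * b) * ((a + b) ^ 2 * E1 - a ^ 2 * E3) = 0 := by
        linear_combination a * (a + b) * hP4 + b * hP3
      have := (mul_eq_zero.mp key).resolve_left (mul_ne_zero hba ha2b)
      linear_combination this
    constructor
    · rw [div_eq_div_iff ha2 hb2]
      refine mul_left_cancel₀ hab2 ?_
      linear_combination b ^ 2 * h13 - a ^ 2 * h23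
    · rw [div_eq_div_iff hb2 hab2]
      linear_combination h23
  · rintro ⟨hA, hB⟩
    rw [div_eq_div_iff ha2 hb2] at hA
    rw [div_eq_div_iff hb2 hab2] at hB
    refine ⟨a + 2 * b, -(2 * a + b), a - b, ?_, by ring, by ring, ?_, ?_⟩
    · rintro ⟨h, -, -⟩
      exact ha2b h
    · have key : b ^ 2 * ((L ^ 2 + a ^ 2) * E1 * (a + 2 * b) + (L ^ 2 + b ^ 2) * E2 * (-(2 * a + b))
          + (L ^ 2 + (a + b) ^ 2) * E3 * (a - b)) = 0 := by
        linear_combination b ^ 2 * (E1 * (a + 2 * b) - E2 * (2 * a + b) + E3 * (a - b)) * hLab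
          - b * (a + b) * (a + 2 * b) * hA - a * b * (a - b) * hB
      exact (mul_eq_zero.mp key).resolve_left hb2
    · have key : b ^ 2 * (a * E1 * (a + 2 * b) + b * E2 * (-(2 * a + b))
          - (a + b) * E3 * (a - b)) = 0 := by
        linear_combination a * (a + 2 * b) * hA + (a + b) * (a - b) * hB
      exact (mul_eq_zero.mp key).resolve_left hb2
end

section
/- Let L > 0 be a real number and let a, b ∈ ℂ satisfy a ≠ 0, b ≠ 0, a + b ≠ 0, a ≠ b, 2a + b ≠ 0, a + 2b ≠ 0, L² = −(a² + ab + b²), and e^a/a² = e^b/b² = e^{−(a+b)}/(a+b)². Then there exist λ ∈ ℂ and a three times continuously differentiable function φ : ℝ → ℂ, not identically zero on [0,L], such that λ φ(x) = −φ′(x) − φ‴(x) for all x ∈ ℝ, and φ(0) = 0, φ′(0) = 0, φ(L) + φ″(L) = 0, φ′(L) = 0. Moreover one may take λ = a b (a+b)/L³ and φ of the form φ(x) = C₁ e^{a x/L} + C₂ e^{b x/L} + C₃ e^{−(a+b) x/L}. -/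
/-!
With `λ = ab(a+b)/L³` and `L² = -(a² + ab + b²)`, the characteristic polynomial `λ + z + z³` of
`λφ = -φ' - φ'''` factors as `(z - a/L)(z - b/L)(z + (a+b)/L)`, so every combination
`φ = Σ Cᵢ e^{rᵢ x}` of the three exponentials solves the equation, and `φ⁽ⁿ⁾(0) = Σ Cᵢ rᵢⁿ`.
The hypothesis `e^a/a² = e^b/b² = e^{-(a+b)}/(a+b)²` says `e^{rᵢ L} = κ rᵢ²` for one constant `κ`,
so also `φ⁽ⁿ⁾(L) = κ Σ Cᵢ rᵢⁿ⁺²`. Reducing `rᵢ³ = -rᵢ - λ` turns the two conditions at `L` into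
consequences of `Σ Cᵢ = Σ Cᵢ rᵢ = 0`, the conditions at `0`. Such a nonzero `C` exists, and then
`φ(L) = κ Σ Cᵢ rᵢ²` is a nonzero multiple of `(a-b)(a+2b)(2a+b)`.
-/

open Set Complex Finset

section ExpPoly

variable {ι : Type*} [Fintype ι] (C r : ι → ℂ)

noncomputable def expPoly (x : ℝ) : ℂ := ∑ i, C i * cexp (r i * x)

theorem hasDerivAt_expPoly (x : ℝ) :
    HasDerivAt (expPoly C r) (expPoly (fun i => C i * r i) r x) x := by
  have hx : HasDerivAt (fun x : ℝ => (x : ℂ)) 1 x := by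
    simpa using (hasDerivAt_id x).ofReal_comp
  refine (HasDerivAt.fun_sum (u := univ) fun i _ =>
    (hx.const_mul (r i)).cexp.const_mul (C i)).congr_deriv ?_
  exact sum_congr rfl fun i _ => by ring

theorem deriv_expPoly : deriv (expPoly C r) = expPoly (fun i => C i * r i) r :=
  funext fun x => (hasDerivAt_expPoly C r x).deriv

theorem contDiff_expPoly {n : WithTop ℕ∞} : ContDiff ℝ n (expPoly C r) :=
  ContDiff.sum fun _ _ => contDiff_const.mul <|
    contDiff_exp.comp (contDiff_const.mul ofRealCLM.contDiff)

theorem expPoly_zero : expPoly C r 0 = ∑ i, C i := by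
  simp [expPoly]

theorem deriv_expPoly_zero : deriv (expPoly C r) 0 = ∑ i, C i * r i := by
  rw [deriv_expPoly, expPoly_zero]

variable {C r} {lam : ℂ}

theorem expPoly_ode (hr : ∀ i, lam + r i + r i ^ 3 = 0) (x : ℝ) :
    lam * expPoly C r x = -deriv (expPoly C r) x - deriv (deriv (deriv (expPoly C r))) x := by
  simp only [deriv_expPoly, expPoly, mul_sum, ← sum_neg_distrib, ← sum_sub_distrib]
  exact sum_congr rfl fun i _ => by linear_combination (C i * cexp (r i * x)) * hr i

variable {κ : ℂ} {L : ℝ}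

theorem expPoly_eq_of_cexp_eq (hexp : ∀ i, cexp (r i * L) = κ * r i ^ 2) :
    expPoly C r L = κ * ∑ i, C i * r i ^ 2 := by
  simp only [expPoly, hexp, mul_sum]
  exact sum_congr rfl fun i _ => by ring

theorem deriv_expPoly_eq_zero_of_cexp_eq (hr : ∀ i, lam + r i + r i ^ 3 = 0)
    (hexp : ∀ i, cexp (r i * L) = κ * r i ^ 2) (hC : ∑ i, C i = 0)
    (hCr : ∑ i, C i * r i = 0) : deriv (expPoly C r) L = 0 := by
  have hsum : ∑ i, C i * r i * r i ^ 2 = ∑ i, (-lam * C i - C i * r i) :=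
    sum_congr rfl fun i _ => by linear_combination C i * hr i
  rw [deriv_expPoly, expPoly_eq_of_cexp_eq hexp, hsum, sum_sub_distrib, ← mul_sum, hC, hCr]
  ring

theorem expPoly_add_deriv_deriv_eq_zero_of_cexp_eq (hr : ∀ i, lam + r i + r i ^ 3 = 0)
    (hexp : ∀ i, cexp (r i * L) = κ * r i ^ 2) (hCr : ∑ i, C i * r i = 0) :
    expPoly C r L + deriv (deriv (expPoly C r)) L = 0 := by
  have hsum : ∑ i, C i * r i ^ 2 + ∑ i, C i * r i * r i * r i ^ 2
      = -lam * ∑ i, C i * r i := by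
    rw [← sum_add_distrib, mul_sum]
    exact sum_congr rfl fun i _ => by linear_combination (C i * r i) * hr i
  rw [deriv_expPoly, deriv_expPoly, expPoly_eq_of_cexp_eq hexp, expPoly_eq_of_cexp_eq hexp,
    ← mul_add, hsum, hCr]
  ring

end ExpPoly

theorem add_self_add_cube_eq_mul_of_sq_eq {K : Type*} [Field K] {L a b : K} (hL : L ≠ 0)
    (h : L ^ 2 = -(a ^ 2 + a * b + b ^ 2)) (z : K) :
    a * b * (a + b) / L ^ 3 + z + z ^ 3 = (z - a / L) * (z - b / L) * (z + (a + b) / L) := by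
  field_simp
  linear_combination (L * z) * h

noncomputable def kdvRoots (a b : ℂ) (L : ℝ) : Fin 3 → ℂ := ![a / L, b / L, -(a + b) / L]

/-- The cross product of `(1, 1, 1)` and `(a, b, -(a+b))`. -/
def kdvCoeffs (a b : ℂ) : Fin 3 → ℂ := ![a + 2 * b, -(2 * a + b), a - b]

section KdV

variable {a b : ℂ} {L : ℝ}

theorem kdvRoots_isRoot (hL : (L : ℂ) ≠ 0) (hLab : (L : ℂ) ^ 2 = -(a ^ 2 + a * b + b ^ 2))
    (i : Fin 3) :
    a * b * (a + b) / L ^ 3 + kdvRoots a b L i + kdvRoots a b L i ^ 3 = 0 := by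
  rw [add_self_add_cube_eq_mul_of_sq_eq hL hLab]
  fin_cases i <;> simp [kdvRoots, -neg_add_rev, neg_div]

theorem cexp_kdvRoots_mul (hL : (L : ℂ) ≠ 0) (ha : a ≠ 0) (hb : b ≠ 0) (hab : a + b ≠ 0)
    (hexp1 : cexp a / a ^ 2 = cexp b / b ^ 2)
    (hexp2 : cexp b / b ^ 2 = cexp (-(a + b)) / (a + b) ^ 2) (i : Fin 3) :
    cexp (kdvRoots a b L i * L) = cexp a / a ^ 2 * L ^ 2 * kdvRoots a b L i ^ 2 := by
  have key : ∀ s : ℂ, s ≠ 0 → cexp s / s ^ 2 = cexp a / a ^ 2 →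
      cexp (s / L * L) = cexp a / a ^ 2 * L ^ 2 * (s / L) ^ 2 := by
    intro s hs h
    rw [div_mul_cancel₀ s hL, ← h]
    field_simp
  fin_cases i
  · exact key a ha rfl
  · exact key b hb hexp1.symm
  · exact key _ (neg_ne_zero.2 hab) (by rw [neg_sq, ← hexp2, hexp1])

theorem sum_kdvCoeffs : ∑ i, kdvCoeffs a b i = 0 := by
  simp only [kdvCoeffs, Fin.sum_univ_three, Matrix.cons_val_zero, Matrix.cons_val_one,
    Matrix.cons_val]
  ring

theorem sum_kdvCoeffs_mul_kdvRoots : ∑ i, kdvCoeffs a b i * kdvRoots a b L i = 0 := by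
  simp only [kdvCoeffs, kdvRoots, Fin.sum_univ_three, Matrix.cons_val_zero,
    Matrix.cons_val_one, Matrix.cons_val]
  ring

theorem sum_kdvCoeffs_mul_kdvRoots_sq :
    ∑ i, kdvCoeffs a b i * kdvRoots a b L i ^ 2 = (a - b) * (a + 2 * b) * (2 * a + b) / L ^ 2 := by
  simp only [kdvCoeffs, kdvRoots, Fin.sum_univ_three, Matrix.cons_val_zero,
    Matrix.cons_val_one, Matrix.cons_val]
  ring

theorem expPoly_kdvCoeffs_kdvRoots :
    expPoly (kdvCoeffs a b) (kdvRoots a b L) = fun x : ℝ =>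
      (a + 2 * b) * cexp (a * x / L) + -(2 * a + b) * cexp (b * x / L)
        + (a - b) * cexp (-(a + b) * x / L) := by
  ext x
  simp [expPoly, kdvCoeffs, kdvRoots, Fin.sum_univ_three, div_mul_eq_mul_div]

end KdV

/-- **Critical lengths admit nonzero eigenfunctions.**
If `L > 0` and `a, b ∈ ℂ` satisfy the nondegeneracy conditions, `L² = −(a² + ab + b²)`
and `e^a/a² = e^b/b² = e^{−(a+b)}/(a+b)²`, then the boundary eigenvalue problem
`λφ = −φ′ − φ‴`, `φ(0) = φ′(0) = 0`, `φ(L) + φ″(L) = 0`, `φ′(L) = 0` has a nonzero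
`C³` solution; moreover one may take `λ = ab(a+b)/L³` and
`φ(x) = C₁ e^{ax/L} + C₂ e^{bx/L} + C₃ e^{−(a+b)x/L}`. -/
theorem kdv_critical_length_gives_eigenfunction
    (L : ℝ) (hL : 0 < L) (a b : ℂ)
    (ha : a ≠ 0) (hb : b ≠ 0) (hab : a + b ≠ 0) (hne : a ≠ b)
    (h2ab : 2 * a + b ≠ 0) (ha2b : a + 2 * b ≠ 0)
    (hLab : (L : ℂ) ^ 2 = -(a ^ 2 + a * b + b ^ 2))
    (hexp1 : Complex.exp a / a ^ 2 = Complex.exp b / b ^ 2)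
    (hexp2 : Complex.exp b / b ^ 2 = Complex.exp (-(a + b)) / (a + b) ^ 2) :
    ∃ (lam : ℂ) (φ : ℝ → ℂ), ContDiff ℝ 3 φ ∧
      (∃ x ∈ Icc (0:ℝ) L, φ x ≠ 0) ∧
      (∀ x : ℝ, lam * φ x = -(deriv φ x) - deriv (deriv (deriv φ)) x) ∧
      φ 0 = 0 ∧ deriv φ 0 = 0 ∧ φ L + deriv (deriv φ) L = 0 ∧ deriv φ L = 0 ∧
      lam = a * b * (a + b) / (L : ℂ) ^ 3 ∧
      (∃ C₁ C₂ C₃ : ℂ, φ = fun x : ℝ =>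
        C₁ * Complex.exp (a * x / L) + C₂ * Complex.exp (b * x / L)
          + C₃ * Complex.exp (-(a + b) * x / L)) := by
  have hL0 : (L : ℂ) ≠ 0 := ofReal_ne_zero.mpr hL.ne'
  have hr := kdvRoots_isRoot hL0 hLab
  have hexp := cexp_kdvRoots_mul hL0 ha hb hab hexp1 hexp2
  refine ⟨_, expPoly (kdvCoeffs a b) (kdvRoots a b L), contDiff_expPoly _ _,
    ⟨L, right_mem_Icc.2 hL.le, ?_⟩, expPoly_ode hr,
    by rw [expPoly_zero, sum_kdvCoeffs], by rw [deriv_expPoly_zero, sum_kdvCoeffs_mul_kdvRoots],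
    expPoly_add_deriv_deriv_eq_zero_of_cexp_eq hr hexp sum_kdvCoeffs_mul_kdvRoots,
    deriv_expPoly_eq_zero_of_cexp_eq hr hexp sum_kdvCoeffs sum_kdvCoeffs_mul_kdvRoots, rfl,
    _, _, _, expPoly_kdvCoeffs_kdvRoots⟩
  rw [expPoly_eq_of_cexp_eq hexp, sum_kdvCoeffs_mul_kdvRoots_sq]
  simp [ha, hL0, hne, sub_eq_zero, h2ab, ha2b, exp_ne_zero]
end

section
/- The set 𝔽 is nonempty and countable. -/
open Complex

section KdVAux


noncomputable def ch (z : ℂ) : ℂ := ∑' n : ℕ, z ^ n / ((2*n).factorial : ℂ)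
noncomputable def shc (z : ℂ) : ℂ := ∑' n : ℕ, z ^ n / ((2*n+1).factorial : ℂ)

lemma ch_sq (w : ℂ) : ch (w^2) = Complex.cosh w := by
  rw [ch, ← (Complex.hasSum_cosh w).tsum_eq]
  exact tsum_congr fun n => by rw [pow_mul]

lemma shc_sq (w : ℂ) : shc (w^2) * w = Complex.sinh w := by
  rw [shc, ← (Complex.hasSum_sinh w).tsum_eq, ← tsum_mul_right]
  exact tsum_congr fun n => by rw [div_mul_eq_mul_div, ← pow_mul, ← pow_succ]

lemma diff_of_series (c : ℕ → ℂ) (hc : ∀ n, ‖c n‖ ≤ ((n.factorial : ℝ))⁻¹) :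
    Differentiable ℂ (fun z : ℂ => ∑' n : ℕ, z ^ n * c n) := by
  set p : FormalMultilinearSeries ℂ ℂ ℂ :=
    fun n => ContinuousMultilinearMap.mkPiRing ℂ (Fin n) (c n) with hp
  have hnorm : ∀ n, ‖p n‖ = ‖c n‖ := fun n => ContinuousMultilinearMap.norm_mkPiRing _
  have hrad : p.radius = ⊤ := by
    apply p.radius_eq_top_of_summable_norm
    intro r
    apply Summable.of_nonneg_of_le (fun n => by positivity)
      (fun n => ?_) (Real.summable_pow_div_factorial r)
    rw [hnorm]
    calc ‖c n‖ * (r:ℝ) ^ n ≤ (n.factorial : ℝ)⁻¹ * (r:ℝ)^n := by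
          apply mul_le_mul_of_nonneg_right (hc n) (by positivity)
      _ = (r:ℝ)^n / (n.factorial : ℝ) := by ring
  have hb := p.hasFPowerSeriesOnBall (by rw [hrad]; exact ENNReal.zero_lt_top)
  rw [hrad] at hb
  have hdiff := hb.differentiableOn
  rw [Metric.emetric_ball_top, differentiableOn_univ] at hdiff
  have : (fun z : ℂ => ∑' n : ℕ, z ^ n * c n) = p.sum := by
    funext z
    refine tsum_congr fun n => ?_
    rw [hp]
    simp [FormalMultilinearSeries.sum, ContinuousMultilinearMap.mkPiRing_apply,
      Finset.prod_const, smul_eq_mul]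
  rw [this]
  exact hdiff

lemma diff_ch : Differentiable ℂ ch := by
  have h := diff_of_series (fun n => (((2*n).factorial : ℂ))⁻¹) (fun n => by
    simp only [norm_inv, Complex.norm_natCast]
    exact inv_anti₀ (by positivity) (by exact_mod_cast Nat.factorial_le (by omega)))
  have he : ch = fun z : ℂ => ∑' n : ℕ, z ^ n * (((2*n).factorial : ℂ))⁻¹ := by
    funext z; exact tsum_congr fun n => by rw [div_eq_mul_inv]
  rw [he]; exact h

lemma diff_shc : Differentiable ℂ shc := by
  have h := diff_of_series (fun n => (((2*n+1).factorial : ℂ))⁻¹) (fun n => by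
    simp only [norm_inv, Complex.norm_natCast]
    exact inv_anti₀ (by positivity) (by exact_mod_cast Nat.factorial_le (by omega)))
  have he : shc = fun z : ℂ => ∑' n : ℕ, z ^ n * (((2*n+1).factorial : ℂ))⁻¹ := by
    funext z; exact tsum_congr fun n => by rw [div_eq_mul_inv]
  rw [he]; exact h

attribute [fun_prop] diff_ch diff_shc


noncomputable def Wf (ε a : ℂ) : ℂ := a^2/4 - ε * a^2 * Complex.exp (-(3/2)*a)

noncomputable def Theta (ε a : ℂ) : ℂ :=
  (a^2/4 + Wf ε a) * ch (Wf ε a) + a * (Wf ε a * shc (Wf ε a))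
    - a^2 * Complex.exp (-(3/2)*a)

lemma diff_Theta (ε : ℂ) : Differentiable ℂ (Theta ε) := by
  have hW : Differentiable ℂ (Wf ε) := by
    unfold Wf
    fun_prop
  unfold Theta
  fun_prop

lemma analytic_Theta (ε : ℂ) : AnalyticOnNhd ℂ (Theta ε) Set.univ :=
  analyticOnNhd_univ_iff_differentiable.mpr (diff_Theta ε)

/-- the bracket computation -/
lemma bracket (a w : ℂ) :
    Complex.exp w * (a/2 + w)^2 + Complex.exp (-w) * (a/2 - w)^2
      = 2*(a^2/4 + w^2) * ch (w^2) + 2*a*(w^2 * shc (w^2)) := by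
  have h1 : ch (w^2) = (Complex.exp w + Complex.exp (-w))/2 := by
    rw [ch_sq, Complex.cosh]
  have h2 : w^2 * shc (w^2) = w * ((Complex.exp w - Complex.exp (-w))/2) := by
    have := shc_sq w
    rw [Complex.sinh] at this
    linear_combination w * this
  rw [h1, h2]; ring

/-- isolated points of a set in a second countable space: countable -/
lemma countable_of_isolated {Z : Set ℂ}
    (h : ∀ z ∈ Z, ∃ U : Set ℂ, IsOpen U ∧ z ∈ U ∧ U ∩ Z = {z}) : Z.Countable := by
  obtain ⟨B, hBc, -, hB⟩ := TopologicalSpace.exists_countable_basis ℂ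
  have : ∀ z ∈ Z, ∃ V ∈ B, z ∈ V ∧ V ∩ Z = {z} := by
    intro z hz
    obtain ⟨U, hU, hzU, hUZ⟩ := h z hz
    obtain ⟨V, hVB, hzV, hVU⟩ := hB.exists_subset_of_mem_open hzU hU
    refine ⟨V, hVB, hzV, Set.Subset.antisymm ?_ ?_⟩
    · intro x hx
      rw [← hUZ]
      exact ⟨hVU hx.1, hx.2⟩
    · rintro x rfl
      exact ⟨hzV, hz⟩
  choose! f hfB hzf hfZ using this
  apply Set.countable_of_injective_of_countable_image (f := f)
  · intro x hx y hy hxy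
    have hxmem : x ∈ f y ∩ Z := by rw [← hxy]; exact ⟨hzf x hx, hx⟩
    rw [hfZ y hy] at hxmem
    exact hxmem
  · exact hBc.mono (Set.image_subset_iff.mpr fun z hz => hfB z hz)

lemma countable_zeros {f : ℂ → ℂ} (hf : AnalyticOnNhd ℂ f Set.univ) {z₀ : ℂ}
    (h0 : f z₀ ≠ 0) : {z : ℂ | f z = 0}.Countable := by
  apply countable_of_isolated
  intro z hz
  rcases (hf z (Set.mem_univ z)).eventually_eq_zero_or_eventually_ne_zero with h | h
  · exfalso
    apply h0
    have := hf.eqOn_zero_of_preconnected_of_eventuallyEq_zero isPreconnected_univ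
      (Set.mem_univ z) h
    exact this (Set.mem_univ z₀)
  · rw [eventually_nhdsWithin_iff] at h
    obtain ⟨U, hU, hUo, hzU⟩ := eventually_nhds_iff.mp h
    refine ⟨U, hUo, hzU, ?_⟩
    apply Set.Subset.antisymm
    · rintro x ⟨hxU, hxZ⟩
      by_contra hne
      exact (hU x hxU (by simpa using hne)) hxZ
    · rintro x rfl
      exact ⟨hzU, hz⟩



lemma Theta_two_ne_zero {εr : ℝ} (hε : εr = 1 ∨ εr = -1) : Theta (εr:ℂ) 2 ≠ 0 := by
  have hmul : Real.exp (-3) * Real.exp 3 = 1 := by rw [← Real.exp_add]; norm_num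
  have h4 : (4:ℝ) < Real.exp 3 := by
    have := Real.add_one_lt_exp (by norm_num : (3:ℝ) ≠ 0); linarith
  have he3 : Real.exp (-3) < 1/4 := by nlinarith [Real.exp_pos 3, Real.exp_pos (-3)]
  set x := 1 - 4*εr*Real.exp (-3) with hxdef
  have hx : 0 < x := by
    rcases hε with h|h <;> rw [hxdef, h] <;> nlinarith [Real.exp_pos (-3)]
  set y := Real.sqrt x with hydef
  have hy0 : 0 ≤ y := Real.sqrt_nonneg x
  have hy2 : y^2 = x := Real.sq_sqrt hx.le
  have hexpc : Complex.exp (-(3/2)*2) = ((Real.exp (-3) : ℝ) : ℂ) := by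
    rw [Complex.ofReal_exp]; norm_num
  have hW : Wf (εr:ℂ) 2 = ((y:ℝ):ℂ)^2 := by
    unfold Wf
    rw [hexpc]
    have h1 : (((y:ℝ):ℂ))^2 = ((x:ℝ):ℂ) := by
      rw [← Complex.ofReal_pow, hy2]
    rw [h1, hxdef]; push_cast; ring
  have hch : ch (Wf (εr:ℂ) 2) = ((Real.cosh y : ℝ):ℂ) := by
    rw [hW, ch_sq, Complex.ofReal_cosh]
  have hsh : Wf (εr:ℂ) 2 * shc (Wf (εr:ℂ) 2) = ((y * Real.sinh y : ℝ):ℂ) := by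
    have h := shc_sq ((y:ℝ):ℂ)
    rw [hW]
    push_cast [Complex.ofReal_sinh]
    linear_combination ((y:ℝ):ℂ) * h
  set t := (1+x)*Real.cosh y + 2*(y*Real.sinh y) - 4*Real.exp (-3) with htdef
  have hT : Theta (εr:ℂ) 2 = ((t:ℝ):ℂ) := by
    unfold Theta
    rw [hch, hsh, hW, hexpc, htdef]
    have h1 : (((y:ℝ):ℂ))^2 = ((x:ℝ):ℂ) := by rw [← Complex.ofReal_pow, hy2]
    rw [h1]
    push_cast
    ring
  rw [hT]
  have ht : 0 < t := by
    have h1 := Real.one_le_cosh y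
    have h2 : 0 ≤ Real.sinh y := Real.sinh_nonneg_iff.mpr hy0
    have h3 : 1 - 4*Real.exp (-3) ≤ x := by
      rcases hε with h|h <;> rw [hxdef, h] <;> nlinarith [Real.exp_pos (-3)]
    nlinarith [Real.exp_pos (-3), mul_nonneg hy0 h2]
  exact_mod_cast ht.ne'

lemma theta_vanish {a b c u ε : ℂ} (ha : a ≠ 0)
    (hsum : a + b + c = 0)
    (hea : Complex.exp a = u * a^2)
    (heb : Complex.exp b = u * b^2) (hec : Complex.exp c = u * c^2)
    (hε2 : ε^2 = 1)
    (hbc : b * c = ε * a^2 * Complex.exp (-(3/2)*a)) :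
    Theta ε a = 0 := by
  obtain ⟨w, hw⟩ := IsAlgClosed.exists_pow_nat_eq (a^2/4 - b*c) (n := 2) (by norm_num)
  have hfac : (b - (-a/2 + w)) * (b - (-a/2 - w)) = 0 := by
    linear_combination (-1 : ℂ) * hw + b * hsum
  have hmain : Complex.exp b * c^2 + Complex.exp c * b^2 = 2*u*(b*c)^2 := by
    rw [heb, hec]; ring
  have hbr := bracket a w
  have hL : Complex.exp b * c^2 + Complex.exp c * b^2
      = Complex.exp (-a/2) * (2*(a^2/4 + w^2) * ch (w^2) + 2*a*(w^2 * shc (w^2))) := by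
    have e1 : Complex.exp (-a/2 + w) = Complex.exp (-a/2) * Complex.exp w :=
      Complex.exp_add _ _
    have e2 : Complex.exp (-a/2 - w) = Complex.exp (-a/2) * Complex.exp (-w) := by
      rw [← Complex.exp_add]; ring_nf
    rcases mul_eq_zero.mp hfac with hb' | hb'
    · have hbval : b = -a/2 + w := by linear_combination hb'
      have hcval : c = -a/2 - w := by linear_combination hsum - hb'
      rw [hbval, hcval, e1, e2]
      linear_combination Complex.exp (-a/2) * hbr
    · have hbval : b = -a/2 - w := by linear_combination hb'
      have hcval : c = -a/2 + w := by linear_combination hsum - hb'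
      rw [hbval, hcval, e1, e2]
      linear_combination Complex.exp (-a/2) * hbr
  rw [hL] at hmain
  have hX2 : (Complex.exp (-(3/2)*a))^2 = Complex.exp (-3*a) := by
    rw [sq, ← Complex.exp_add]; congr 1; ring
  have hWf : Wf ε a = w^2 := by
    rw [Wf, ← hbc, ← hw]
  have he1 : Complex.exp (-a/2) * Complex.exp (a/2) = 1 := by
    rw [← Complex.exp_add, show -a/2 + a/2 = (0:ℂ) by ring, Complex.exp_zero]
  have he2 : Complex.exp a * Complex.exp (-3*a) * Complex.exp (a/2)
      = Complex.exp (-(3/2)*a) := by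
    rw [← Complex.exp_add, ← Complex.exp_add]; congr 1; ring
  have hstep : (a^2/4 + w^2) * ch (w^2) + a*(w^2 * shc (w^2))
      = u * (b*c)^2 * Complex.exp (a/2) := by
    linear_combination (Complex.exp (a/2)/2) * hmain
      - ((a^2/4 + w^2) * ch (w^2) + a*(w^2 * shc (w^2))) * he1
  have hfin : u * (b*c)^2 * Complex.exp (a/2) = a^2 * Complex.exp (-(3/2)*a) := by
    rw [hbc]
    calc u * (ε * a^2 * Complex.exp (-(3/2)*a))^2 * Complex.exp (a/2)
        = (u * a^2) * (ε^2 * (a^2 * ((Complex.exp (-(3/2)*a))^2 * Complex.exp (a/2)))) := by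
          ring
      _ = a^2 * Complex.exp (-(3/2)*a) := by
          rw [hε2, ← hea, hX2]
          linear_combination a^2 * he2
  unfold Theta
  rw [hWf, hstep, hfin]
  ring

lemma witness_theta {a b : ℂ} (ha : a ≠ 0) (hb : b ≠ 0) (hs : a + b ≠ 0)
    (h1 : Complex.exp a / a^2 = Complex.exp b / b^2)
    (h2 : Complex.exp b / b^2 = Complex.exp (-(a+b)) / (a+b)^2) :
    ∃ ε : ℂ, (ε = 1 ∨ ε = -1) ∧ Theta ε a = 0 ∧
      ε * a^2 * Complex.exp (-(3/2)*a) - a^2 = -(a^2 + a*b + b^2) := by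
  set c := -(a+b) with hcdef
  have hc : c ≠ 0 := neg_ne_zero.mpr hs
  have ha2 : a^2 ≠ 0 := pow_ne_zero _ ha
  have hb2 : b^2 ≠ 0 := pow_ne_zero _ hb
  have hc2 : c^2 ≠ 0 := pow_ne_zero _ hc
  set u := Complex.exp a / a^2 with hudef
  have hea : Complex.exp a = u * a^2 := by rw [hudef]; field_simp
  have heb : Complex.exp b = u * b^2 := by rw [h1]; field_simp
  have hec : Complex.exp c = u * c^2 := by
    have hcsq : c^2 = (a+b)^2 := by rw [hcdef]; ring
    have hu' : u = Complex.exp c / c^2 := by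
      rw [h1, h2, hcsq]
    rw [hu']; field_simp
  have hsum : a + b + c = 0 := by rw [hcdef]; ring
  have hprod : Complex.exp a * Complex.exp b * Complex.exp c = 1 := by
    rw [← Complex.exp_add, ← Complex.exp_add, show a + b + c = 0 from hsum,
      Complex.exp_zero]
  have huabc : u^3 * (a*b*c)^2 = 1 := by
    rw [hea, heb, hec] at hprod; linear_combination hprod
  set E := Complex.exp ((3/2)*a) with hEdef
  have hE : E ≠ 0 := Complex.exp_ne_zero _
  have hEinv : Complex.exp (-(3/2)*a) * E = 1 := by
    rw [hEdef, ← Complex.exp_add, show -(3/2)*a + 3/2*a = (0:ℂ) by ring,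
      Complex.exp_zero]
  have hexp3 : Complex.exp (3*a) = (Complex.exp a)^3 := by
    rw [show (3:ℂ)*a = a + (a + a) by ring, Complex.exp_add, Complex.exp_add]; ring
  have hE2 : E^2 = Complex.exp (3*a) := by
    rw [hEdef, sq, ← Complex.exp_add]; congr 1; ring
  have hkey : (a*b*c*E - a^3) * (a*b*c*E + a^3) = 0 := by
    have h6 : (a*b*c)^2 * E^2 = a^6 := by
      rw [hE2, hexp3, hea]
      linear_combination a^6 * huabc
    linear_combination h6
  have main : ∀ ε : ℂ, ε^2 = 1 → b * c = ε * a^2 * Complex.exp (-(3/2)*a) →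
      Theta ε a = 0 ∧ ε * a^2 * Complex.exp (-(3/2)*a) - a^2 = -(a^2 + a*b + b^2) := by
    intro ε hε2 hbc
    refine ⟨theta_vanish ha hsum hea heb hec hε2 hbc, ?_⟩
    rw [← hbc, hcdef]; ring
  rcases mul_eq_zero.mp hkey with h | h
  · refine ⟨1, Or.inl rfl, main 1 (by norm_num) ?_⟩
    have hbcE : b * c * E = a^2 :=
      mul_left_cancel₀ ha (by linear_combination h)
    linear_combination Complex.exp (-(3/2)*a) * hbcE - (b*c) * hEinv
  · refine ⟨-1, Or.inr rfl, main (-1) (by norm_num) ?_⟩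
    have hbcE : b * c * E = -a^2 :=
      mul_left_cancel₀ ha (by linear_combination h)
    linear_combination Complex.exp (-(3/2)*a) * hbcE - (b*c) * hEinv

end KdVAux

/-- The set `𝔽` of critical lengths for the linear KdV system controlled through
the single Neumann input `y_x(L,t)`:
`𝔽 = {L > 0 : ∃ a b ∈ ℂ, L² = −(a² + ab + b²) and e^a/a² = e^b/b² = e^{−(a+b)}/(a+b)²}`. -/
def kdvCriticalSetF : Set ℝ :=
  {L : ℝ | 0 < L ∧ ∃ a b : ℂ, a ≠ 0 ∧ b ≠ 0 ∧ a + b ≠ 0 ∧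
    (L : ℂ) ^ 2 = -(a ^ 2 + a * b + b ^ 2) ∧
    Complex.exp a / a ^ 2 = Complex.exp b / b ^ 2 ∧
    Complex.exp b / b ^ 2 = Complex.exp (-(a + b)) / (a + b) ^ 2}


noncomputable def phiF (p : ℝ) : ℝ :=
  p * Real.sqrt (4 * Real.exp (3*p) - 1) - 2 * Real.arctan (Real.sqrt (4 * Real.exp (3*p) - 1))

lemma cont_phiF : Continuous phiF := by
  have hin : Continuous fun p : ℝ => 4 * Real.exp (3*p) - 1 := by fun_prop
  unfold phiF
  exact (continuous_id.mul (Real.continuous_sqrt.comp hin)).sub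
    (continuous_const.mul (Real.continuous_arctan.comp (Real.continuous_sqrt.comp hin)))

lemma exists_phiF_eq : ∃ p ∈ Set.Icc (1/10 : ℝ) 2, phiF p = 2 * Real.pi := by
  have hπ1 : (3.14 : ℝ) < Real.pi := by
    have := Real.pi_gt_d6; linarith
  have hπ2 : Real.pi < 3.15 := Real.pi_lt_d2
  have h1 : phiF (1/10) < 2 * Real.pi := by
    unfold phiF
    rw [show (3*((1:ℝ)/10)) = 3/10 by norm_num]
    have he : Real.exp ((3:ℝ)/10) ≤ Real.exp 1 := Real.exp_le_exp.mpr (by norm_num)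
    have he1 : Real.exp 1 < 2.7182818286 := Real.exp_one_lt_d9
    have hnn := Real.sqrt_nonneg (4 * Real.exp ((3:ℝ)/10) - 1)
    have hsq := Real.sq_sqrt (show (0:ℝ) ≤ 4 * Real.exp ((3:ℝ)/10) - 1 by
      nlinarith [Real.one_le_exp (show (0:ℝ) ≤ 3/10 by norm_num)])
    have hs : Real.sqrt (4 * Real.exp ((3:ℝ)/10) - 1) ≤ 4 := by nlinarith
    have harc : 0 ≤ Real.arctan (Real.sqrt (4 * Real.exp ((3:ℝ)/10) - 1)) := by
      have := Real.arctan_strictMono.monotone (Real.sqrt_nonneg (4 * Real.exp ((3:ℝ)/10) - 1))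
      rwa [Real.arctan_zero] at this
    nlinarith
  have h2 : 2 * Real.pi < phiF 2 := by
    unfold phiF
    rw [show (3*(2:ℝ)) = 6 by norm_num]
    have he : (7:ℝ) < Real.exp 6 := by
      have := Real.add_one_lt_exp (show (6:ℝ) ≠ 0 by norm_num); linarith
    have hnn := Real.sqrt_nonneg (4 * Real.exp (6:ℝ) - 1)
    have hsq := Real.sq_sqrt (show (0:ℝ) ≤ 4 * Real.exp (6:ℝ) - 1 by nlinarith)
    have hs : (5:ℝ) ≤ Real.sqrt (4 * Real.exp (6:ℝ) - 1) := by nlinarith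
    have harc : Real.arctan (Real.sqrt (4 * Real.exp (6:ℝ) - 1)) < Real.pi/2 :=
      Real.arctan_lt_pi_div_two _
    nlinarith
  have := intermediate_value_Icc (show (1/10:ℝ) ≤ 2 by norm_num) cont_phiF.continuousOn
  have hmem : 2 * Real.pi ∈ Set.Icc (phiF (1/10)) (phiF 2) := ⟨h1.le, h2.le⟩
  obtain ⟨p, hp, hpe⟩ := this hmem
  exact ⟨p, hp, hpe⟩

theorem kdv_nonempty : kdvCriticalSetF.Nonempty := by
  obtain ⟨p, hpI, hphi⟩ := exists_phiF_eq
  have hp0 : 0 < p := lt_of_lt_of_le (by norm_num) hpI.1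
  set s := Real.sqrt (4 * Real.exp (3*p) - 1) with hsdef
  have hePos : (1:ℝ) ≤ Real.exp (3*p) := Real.one_le_exp (by positivity)
  have hsub : (0:ℝ) ≤ 4 * Real.exp (3*p) - 1 := by nlinarith
  have hs2 : s^2 = 4 * Real.exp (3*p) - 1 := Real.sq_sqrt hsub
  have hs0 : 0 < s := Real.sqrt_pos.mpr (by nlinarith)
  set q := p * s with hqdef
  have hq0 : 0 < q := mul_pos hp0 hs0
  set θ := Real.arctan s with hθdef
  have hq : q = 2*θ + 2*Real.pi := by
    unfold phiF at hphi
    rw [← hsdef, ← hθdef] at hphi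
    rw [hqdef]; linarith
  have h1s : Real.sqrt (1+s^2)^2 = 1 + s^2 := Real.sq_sqrt (by positivity)
  have h1s0 : 0 < Real.sqrt (1+s^2) := Real.sqrt_pos.mpr (by positivity)
  have hcos2 : (p^2+q^2) * Real.cos (2*θ) = p^2 - q^2 := by
    rw [Real.cos_two_mul, hθdef, Real.cos_arctan]
    rw [div_pow, one_pow, h1s]
    rw [hqdef]
    field_simp
    ring
  have hsin2 : (p^2+q^2) * Real.sin (2*θ) = 2*p*q := by
    rw [Real.sin_two_mul, hθdef, Real.sin_arctan, Real.cos_arctan]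
    rw [hqdef]
    field_simp
    nlinarith [h1s]
  set a : ℂ := (p:ℂ) + (q:ℂ)*I with hadef
  set b : ℂ := (p:ℂ) - (q:ℂ)*I with hbdef
  have ha : a ≠ 0 := by
    intro h
    have : q = 0 := by
      have := congrArg Complex.im h
      simpa [hadef] using this
    exact hq0.ne' this
  have hb : b ≠ 0 := by
    intro h
    have : q = 0 := by
      have := congrArg Complex.im h
      simpa [hbdef] using this
    exact hq0.ne' this
  have hab : a + b = ((2*p : ℝ) : ℂ) := by rw [hadef, hbdef]; push_cast; ring
  have hs' : a + b ≠ 0 := by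
    rw [hab]
    simpa using by positivity
  have hcos2θ : Complex.cos (((2*θ:ℝ):ℂ)) = ((Real.cos (2*θ) : ℝ) : ℂ) :=
    (Complex.ofReal_cos _).symm
  have hsin2θ : Complex.sin (((2*θ:ℝ):ℂ)) = ((Real.sin (2*θ) : ℝ) : ℂ) :=
    (Complex.ofReal_sin _).symm
  have expand : a^2 = ((p^2 - q^2 : ℝ):ℂ) + ((2*p*q :ℝ):ℂ)*I := by
    rw [hadef]
    apply Complex.ext <;> simp [pow_two] <;> ring
  have hrhs : ((p^2+q^2 : ℝ) : ℂ) * Complex.exp (((2*θ : ℝ):ℂ) * I)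
      = ((p^2 - q^2 : ℝ):ℂ) + ((2*p*q :ℝ):ℂ)*I := by
    rw [Complex.exp_mul_I, hcos2θ, hsin2θ]
    calc ((p^2+q^2 : ℝ) : ℂ) * (((Real.cos (2*θ) : ℝ):ℂ) + ((Real.sin (2*θ) : ℝ):ℂ)*I)
        = (((p^2+q^2) * Real.cos (2*θ) : ℝ):ℂ) + (((p^2+q^2) * Real.sin (2*θ) :ℝ):ℂ)*I := by
          push_cast; ring
      _ = ((p^2 - q^2 : ℝ):ℂ) + ((2*p*q :ℝ):ℂ)*I := by rw [hcos2, hsin2]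
  have hzsq : a^2 = ((p^2+q^2 : ℝ) : ℂ) * Complex.exp (((2*θ : ℝ):ℂ) * I) :=
    expand.trans hrhs.symm
  have hexpa : Complex.exp a = ((Real.exp p : ℝ):ℂ) * Complex.exp (((2*θ:ℝ):ℂ) * I) := by
    rw [hadef, Complex.exp_add]
    congr 1
    · rw [Complex.ofReal_exp]
    · have hqc : ((q:ℝ):ℂ) = ((2*θ:ℝ):ℂ) + 2*(Real.pi:ℂ) := by
        rw [hq]; push_cast; ring
      have : ((q:ℝ):ℂ)*I = ((2*θ:ℝ):ℂ)*I + 2*(Real.pi:ℂ)*I := by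
        rw [hqc]; ring
      rw [this, Complex.exp_add, Complex.exp_two_pi_mul_I, mul_one]
  have hUnit : Complex.exp (((2*θ:ℝ):ℂ) * I) ≠ 0 := Complex.exp_ne_zero _
  have hpq2 : (0:ℝ) < p^2 + q^2 := by positivity
  have hra : Complex.exp a / a^2 = ((Real.exp p / (p^2+q^2) : ℝ):ℂ) := by
    rw [hexpa, hzsq, mul_div_mul_right _ _ hUnit]
    push_cast
    ring
  have hconj : (starRingEnd ℂ) a = b := by
    rw [hadef, hbdef]
    simp [map_add, map_mul, Complex.conj_I, Complex.conj_ofReal]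
    ring
  have hrb : Complex.exp b / b^2 = ((Real.exp p / (p^2+q^2) : ℝ):ℂ) := by
    rw [← hconj, Complex.exp_conj, ← map_pow, ← map_div₀, hra, Complex.conj_ofReal]
  have hcond1 : Complex.exp a / a^2 = Complex.exp b / b^2 := hra.trans hrb.symm
  have hq2 : q^2 = p^2*(4*Real.exp (3*p) - 1) := by
    rw [hqdef, mul_pow, hs2]
  have hab2 : (a+b)^2 = ((4*p^2 : ℝ):ℂ) := by rw [hab]; push_cast; ring
  have hexpab : Complex.exp (-(a+b)) = ((Real.exp (-(2*p)) : ℝ):ℂ) := by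
    rw [hab, ← Complex.ofReal_neg, Complex.ofReal_exp]
  have hr : Real.exp p / (p^2+q^2) = Real.exp (-(2*p)) / (4*p^2) := by
    have hprod : Real.exp (-(2*p)) * Real.exp (3*p) = Real.exp p := by
      rw [← Real.exp_add]; congr 1; ring
    rw [div_eq_div_iff (by positivity) (by positivity)]
    linear_combination (-(4*p^2))*hprod - Real.exp (-(2*p)) * hq2
  have hcond2 : Complex.exp b / b^2 = Complex.exp (-(a+b)) / (a+b)^2 := by
    rw [hrb, hexpab, hab2, hr]
    norm_cast
  have hqp : 0 < q^2 - 3*p^2 := by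
    have h3p : 3*p + 1 < Real.exp (3*p) := by
      have := Real.add_one_lt_exp (show (3*p:ℝ) ≠ 0 by positivity); linarith
    nlinarith
  set L := Real.sqrt (q^2 - 3*p^2) with hLdef
  have hL0 : 0 < L := Real.sqrt_pos.mpr hqp
  have hL2 : L^2 = q^2 - 3*p^2 := Real.sq_sqrt hqp.le
  have hsumsq : -(a^2 + a*b + b^2) = ((q^2 - 3*p^2 : ℝ):ℂ) := by
    rw [hadef, hbdef]
    apply Complex.ext <;> simp [pow_two] <;> ring
  have hLc : ((L:ℝ):ℂ)^2 = -(a^2 + a*b + b^2) := by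
    rw [hsumsq, ← Complex.ofReal_pow, hL2]
  exact ⟨L, hL0, a, b, ha, hb, hs', hLc, hcond1, hcond2⟩


theorem kdv_countable : kdvCriticalSetF.Countable := by
  have hZ1 : {z : ℂ | Theta 1 z = 0}.Countable := by
    refine countable_zeros (analytic_Theta 1) (z₀ := 2) ?_
    have := Theta_two_ne_zero (εr := 1) (Or.inl rfl)
    simpa using this
  have hZ2 : {z : ℂ | Theta (-1) z = 0}.Countable := by
    refine countable_zeros (analytic_Theta (-1)) (z₀ := 2) ?_
    have := Theta_two_ne_zero (εr := -1) (Or.inr rfl)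
    simpa using this
  have g : ℂ → ℂ → ℝ := fun ε a => Real.sqrt ((ε * a^2 * Complex.exp (-(3/2)*a) - a^2).re)
  refine Set.Countable.mono
    (s₂ := ((fun a => Real.sqrt (((1:ℂ) * a^2 * Complex.exp (-(3/2)*a) - a^2).re)) ''
        {z : ℂ | Theta 1 z = 0}) ∪
      ((fun a => Real.sqrt (((-1:ℂ) * a^2 * Complex.exp (-(3/2)*a) - a^2).re)) ''
        {z : ℂ | Theta (-1) z = 0}))
    ?_ ((hZ1.image _).union (hZ2.image _))
  intro L hL
  obtain ⟨hL0, a, b, ha, hb, hs, hLab, h1, h2⟩ := hL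
  obtain ⟨ε, hε, hTheta, hlam⟩ := witness_theta ha hb hs h1 h2
  have hval : Real.sqrt ((ε * a^2 * Complex.exp (-(3/2)*a) - a^2).re) = L := by
    have hcast : ε * a^2 * Complex.exp (-(3/2)*a) - a^2 = ((L^2 : ℝ):ℂ) := by
      rw [hlam, ← hLab]; push_cast; ring
    rw [hcast, Complex.ofReal_re, Real.sqrt_sq hL0.le]
  rcases hε with rfl | rfl
  · exact Or.inl ⟨a, hTheta, hval⟩
  · exact Or.inr ⟨a, hTheta, hval⟩

/-- **The critical set `𝔽` is nonempty and countable.** -/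
theorem kdvCriticalSetF_nonempty_and_countable :
    kdvCriticalSetF.Nonempty ∧ kdvCriticalSetF.Countable :=
  ⟨kdv_nonempty, kdv_countable⟩
end
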